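/- arXiv:0811.1955 — 6 statements merged into one kernel-verified Lean document; each statement's English description precedes it below -/
import Mathlib

section
/- Let A be a Noetherian commutative ring, I ⊆ A an ideal, and M an A-module. Let U ⊆ Spec A be the open complement of the vanishing locus V(I), and let M̃ denote the quasicoherent sheaf on Spec A associated to M. The restriction maps Hom_A(I^{n+1}, M) ← Hom_A(I^n, M) (precomposition with the inclusion I^{n+1} ⊆ I^n) make (Hom_A(I^n, M))_{n≥0} a direct system, and the map sending the class of f : I^n → M to the unique section of M̃ over U whose restriction to each basic open D(g) with g ∈ I is f(g^n)/g^n ∈ M_g is an isomorphism of A-modules colim_n Hom_A(I^n, M) ≅ Γ(U, M̃). -/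
/-!
A section of `M̃` over `U = Spec A ∖ V(I)` is given on finitely many basic opens `D(bᵢ)` covering
`U` by fractions `aᵢ / bᵢ` with `bⱼ aᵢ = bᵢ aⱼ`. The `bᵢ` generate an ideal with the same radical
as `I`, so some `I^N` lies in the ideal generated by the `bᵢ^k`, and `Σ cᵢ bᵢ^k ↦ Σ cᵢ bᵢ^(k-1) aᵢ`
defines a homomorphism `I^N → M` inducing the section; Artin–Rees makes it well defined once `k`
is large. Conversely, if `f : Iⁿ → M` induces the zero section then `f(xⁿ)` is killed by a power
of `x` for every `x ∈ I`, so `f` vanishes on an ideal whose radical contains `I`, hence on some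
`I^m`.
-/

open AlgebraicGeometry TopologicalSpace Opposite

/-- The transition maps `Hom_A(Iⁿ, M) → Hom_A(Iⁿ⁺¹, M)` (precomposition with the inclusion
`Iⁿ⁺¹ ⊆ Iⁿ`, here for any `n ≤ m`), making `(Hom_A(Iⁿ, M))ₙ` a direct system. -/
noncomputable def extTransition (A : Type) [CommRing A] (I : Ideal A)
    (M : Type) [AddCommGroup M] [Module A M] :
    ∀ (n m : ℕ), n ≤ m → ((I ^ n : Ideal A) →ₗ[A] M) →ₗ[A] ((I ^ m : Ideal A) →ₗ[A] M) :=
  fun _ _ h => LinearMap.lcomp A M (Submodule.inclusion (Ideal.pow_le_pow_right h))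

/-- The open complement `U ⊆ Spec A` of the vanishing locus `V(I)`. -/
def complementZeroLocus (A : Type) [CommRing A] (I : Ideal A) :
    Opens (PrimeSpectrum A) :=
  ⟨(PrimeSpectrum.zeroLocus (I : Set A))ᶜ, (PrimeSpectrum.isClosed_zeroLocus _).isOpen_compl⟩

section CommutativeAlgebra

variable {A : Type*} [CommRing A] {M : Type*} [AddCommGroup M] [Module A M]

theorem LinearMap.coe_smul_apply_comm {J : Ideal A} (f : J →ₗ[A] M) (x y : J) :
    (x : A) • f y = (y : A) • f x := by
  rw [← map_smul, ← map_smul]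
  exact congrArg f (Subtype.ext (mul_comm _ _))

theorem LocalizedModule.mk_apply_eq_mk_apply {J : Ideal A} {S : Submonoid A} (f : J →ₗ[A] M)
    {x y : J} (hx : (x : A) ∈ S) (hy : (y : A) ∈ S) :
    LocalizedModule.mk (f x) ⟨x.1, hx⟩ = LocalizedModule.mk (f y) ⟨y.1, hy⟩ :=
  LocalizedModule.mk_eq.mpr
    ⟨1, by simpa [Submonoid.smul_def] using LinearMap.coe_smul_apply_comm f y x⟩

theorem exists_pow_smul_eq_zero_of_forall_prime {a : A} {m : M}
    (h : ∀ p : PrimeSpectrum A, a ∉ p.asIdeal → ∃ u ∉ p.asIdeal, u • m = 0) :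
    ∃ k, a ^ k • m = 0 := by
  have ha : a ∈ (Ideal.torsionOf A M m).radical := by
    rw [Ideal.radical_eq_sInf, Ideal.mem_sInf]
    rintro P ⟨hmP, hP⟩
    by_contra haP
    obtain ⟨u, huP, hu⟩ := h ⟨P, hP⟩ haP
    exact huP (hmP ((Ideal.mem_torsionOf_iff m u).mpr hu))
  obtain ⟨k, hk⟩ := ha
  exact ⟨k, (Ideal.mem_torsionOf_iff m _).mp hk⟩

theorem exists_pow_mul_smul_sub_eq_zero {g h : A} {m n : M}
    (H : ∀ p : PrimeSpectrum A, (hg : g ∉ p.asIdeal) → (hh : h ∉ p.asIdeal) →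
      (LocalizedModule.mk m ⟨g, hg⟩ : LocalizedModule p.asIdeal.primeCompl M) =
        LocalizedModule.mk n ⟨h, hh⟩) :
    ∃ k, (g * h) ^ k • (h • m - g • n) = 0 :=
  exists_pow_smul_eq_zero_of_forall_prime fun p hgh => by
    have hg : g ∉ p.asIdeal := fun hg => hgh (p.asIdeal.mul_mem_right h hg)
    have hh : h ∉ p.asIdeal := fun hh => hgh (p.asIdeal.mul_mem_left g hh)
    obtain ⟨⟨u, hu⟩, huhg⟩ := LocalizedModule.mk_eq.mp (H p hg hh)
    exact ⟨u, hu, by simpa [Submonoid.smul_def, smul_sub, sub_eq_zero] using huhg⟩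

theorem exists_pow_smul_pow_smul_eq {ι : Type*} [Finite ι] {g : ι → A} {f : ι → M}
    (h : ∀ i j, ∃ k, (g i * g j) ^ k • (g j • f i - g i • f j) = 0) :
    ∃ K, ∀ i j, g j ^ (K + 1) • g i ^ K • f i = g i ^ (K + 1) • g j ^ K • f j := by
  choose k hk using h
  obtain ⟨K, hK⟩ := Finite.exists_le fun ij : ι × ι => k ij.1 ij.2
  refine ⟨K, fun i j => ?_⟩
  have hKij : (g i * g j) ^ K • (g j • f i - g i • f j) = 0 := by
    rw [← Nat.sub_add_cancel (hK (i, j)), pow_add, mul_smul, hk, smul_zero]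
  linear_combination (norm := module) hKij

theorem LinearMap.exists_comp_rangeRestrict_eq {R P N Q : Type*} [CommRing R]
    [AddCommGroup P] [Module R P] [AddCommGroup N] [Module R N] [AddCommGroup Q] [Module R Q]
    (φ : P →ₗ[R] N) (ψ : P →ₗ[R] Q) (h : LinearMap.ker φ ≤ LinearMap.ker ψ) :
    ∃ F : LinearMap.range φ →ₗ[R] Q, F ∘ₗ φ.rangeRestrict = ψ :=
  ⟨(LinearMap.ker φ).liftQ ψ h ∘ₗ φ.quotKerEquivRange.symm.toLinearMap,
    LinearMap.ext fun v => by
      simp only [LinearMap.comp_apply, LinearEquiv.coe_coe]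
      rw [show φ.rangeRestrict v = ⟨φ v, LinearMap.mem_range_self φ v⟩ from rfl,
        LinearMap.quotKerEquivRange_symm_apply_image]
      rfl⟩

section Gluing

variable {ι : Type*} [Fintype ι] {b : ι → A} {a : ι → M}

theorem smul_linearCombination_of_smul_eq_smul (hab : ∀ i j, b j • a i = b i • a j)
    (c : ι → A) (i : ι) :
    b i • Fintype.linearCombination A a c = Fintype.linearCombination A b c • a i := by
  simp only [Fintype.linearCombination_apply, Finset.smul_sum, Finset.sum_smul]
  refine Finset.sum_congr rfl fun j _ => ?_
  rw [smul_comm, ← hab, smul_eq_mul, mul_smul]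

variable [IsNoetherianRing A]

theorem exists_linearCombination_eq_zero_of_mem_pow (I : Ideal A)
    (hb : I ≤ (Ideal.span (Set.range b)).radical) (hab : ∀ i j, b j • a i = b i • a j) :
    ∃ d, ∀ c : ι → A, (∀ i, c i ∈ I ^ d) → Fintype.linearCombination A b c = 0 →
      Fintype.linearCombination A a c = 0 := by
  obtain ⟨e, he⟩ := Ideal.exists_pow_le_of_le_radical_of_fg hb (IsNoetherian.noetherian I)
  set K := LinearMap.ker (Fintype.linearCombination A b)
  obtain ⟨k, hk⟩ := I.exists_pow_inf_eq_pow_smul K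
  -- `θ = Σ cᵢ aᵢ` maps `K = ker (Σ cᵢ bᵢ)` into the `span b`-torsion, hence into the
  -- `I^e`-torsion; Artin–Rees puts `K ∩ I^(k+e) A^ι` inside `I^e K`.
  have hkill : ∀ v ∈ K, ∀ r ∈ I ^ e, r • Fintype.linearCombination A a v = 0 := by
    intro v hv r hr
    have hspan : Ideal.span (Set.range b) ≤ (A ∙ Fintype.linearCombination A a v).annihilator := by
      rw [Ideal.span_le]
      rintro _ ⟨j, rfl⟩
      rw [SetLike.mem_coe, Submodule.mem_annihilator_span_singleton,
        smul_linearCombination_of_smul_eq_smul hab, LinearMap.mem_ker.mp hv, zero_smul]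
    exact (Submodule.mem_annihilator_span_singleton _ _).mp (hspan (he hr))
  refine ⟨k + e, fun c hc hcK => ?_⟩
  have hctop : c ∈ I ^ (k + e) • (⊤ : Submodule A (ι → A)) := by
    classical
    rw [pi_eq_sum_univ c]
    exact Submodule.sum_mem _ fun i _ => Submodule.smul_mem_smul (hc i) Submodule.mem_top
  have hcK' : c ∈ I ^ e • K := by
    have := hk (k + e) (by omega) ▸ Submodule.mem_inf.mpr ⟨hctop, hcK⟩
    rw [Nat.add_sub_cancel_left] at this
    exact Submodule.smul_mono le_rfl inf_le_right this
  refine Submodule.smul_induction_on hcK' (fun r hr v hv => ?_) fun x y hx hy => ?_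
  · rw [map_smul]
    exact hkill v hv r hr
  · rw [map_add, hx, hy, add_zero]

theorem exists_linearMap_pow_smul_eq (I : Ideal A)
    (hb : (Ideal.span (Set.range b)).radical = I.radical) (hab : ∀ i j, b j • a i = b i • a j) :
    ∃ N, ∃ F : (I ^ N : Ideal A) →ₗ[A] M,
      ∀ i (x : (I ^ N : Ideal A)), b i • F x = (x : A) • a i := by
  have hIb : I ≤ (Ideal.span (Set.range b)).radical := hb ▸ Ideal.le_radical
  obtain ⟨d, hd⟩ := exists_linearCombination_eq_zero_of_mem_pow I hIb hab
  obtain ⟨D, hD⟩ : ∃ D, Ideal.span (Set.range b) ^ D ≤ I :=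
    Ideal.exists_pow_le_of_le_radical_of_fg (hb ▸ Ideal.le_radical) (IsNoetherian.noetherian _)
  -- `F (Σ cᵢ bᵢ^(Dd+1)) = Σ cᵢ bᵢ^(Dd) aᵢ`, well defined because `bᵢ^(Dd) ∈ I^d`.
  set μ := LinearMap.mulLeft A (b ^ (D * d))
  have hμ : ∀ c i, μ c i ∈ I ^ d := fun c i => by
    refine Ideal.mul_mem_right _ _ ?_
    rw [Pi.pow_apply, pow_mul]
    exact Ideal.pow_mem_pow (hD (Ideal.pow_mem_pow (Ideal.subset_span (Set.mem_range_self i)) D)) d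
  set φ := Fintype.linearCombination A b ∘ₗ μ
  obtain ⟨F₀, hF₀⟩ := LinearMap.exists_comp_rangeRestrict_eq φ
    (Fintype.linearCombination A a ∘ₗ μ) fun c hc => hd _ (hμ c) hc
  have hrange : I ≤ Ideal.radical (LinearMap.range φ) := by
    refine hIb.trans (Ideal.radical_le_radical_iff.mpr (Ideal.span_le.mpr ?_))
    rintro _ ⟨i, rfl⟩
    classical
    exact ⟨D * d + 1, Pi.single i 1, by
      simp [φ, μ, pow_succ, ← Pi.single_mul_right, Fintype.linearCombination_apply_single]⟩
  obtain ⟨N, hN⟩ := Ideal.exists_pow_le_of_le_radical_of_fg hrange (IsNoetherian.noetherian I)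
  refine ⟨N, F₀ ∘ₗ Submodule.inclusion hN, fun i x => ?_⟩
  obtain ⟨c, hc⟩ := hN x.2
  have hx : Submodule.inclusion hN x = φ.rangeRestrict c := Subtype.ext hc.symm
  rw [LinearMap.comp_apply, hx, ← LinearMap.comp_apply, hF₀, LinearMap.comp_apply,
    smul_linearCombination_of_smul_eq_smul hab, ← hc]
  rfl

end Gluing

end CommutativeAlgebra

section Sections

variable {A : Type} [CommRing A] {I : Ideal A} {M : Type} [AddCommGroup M] [Module A M]

theorem mem_complementZeroLocus {p : PrimeSpectrum A} :
    p ∈ complementZeroLocus A I ↔ ¬I ≤ p.asIdeal :=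
  Iff.rfl

theorem mem_complementZeroLocus_of_mem_of_notMem {p : PrimeSpectrum A} {x : A} (hxI : x ∈ I)
    (hxp : x ∉ p.asIdeal) : p ∈ complementZeroLocus A I :=
  fun h => hxp (h hxI)

theorem exists_mem_pow_notMem_of_mem_complementZeroLocus {p : PrimeSpectrum A}
    (hp : p ∈ complementZeroLocus A I) (n : ℕ) : ∃ x ∈ I ^ n, x ∉ p.asIdeal :=
  SetLike.not_le_iff_exists.mp fun h => hp (p.isPrime.le_of_pow_le h)

theorem radical_span_range_eq_of_iSup_basicOpen_eq {ι : Type*} {b : ι → A}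
    (h : ⨆ i, PrimeSpectrum.basicOpen (b i) = complementZeroLocus A I) :
    (Ideal.span (Set.range b)).radical = I.radical := by
  rw [← PrimeSpectrum.zeroLocus_eq_iff, PrimeSpectrum.zeroLocus_span]
  ext p
  have hp := SetLike.ext_iff.mp h p
  simp only [Opens.mem_iSup, PrimeSpectrum.mem_basicOpen] at hp
  simp only [PrimeSpectrum.mem_zeroLocus, Set.range_subset_iff, SetLike.mem_coe]
  rw [mem_complementZeroLocus] at hp
  exact not_iff_not.mp (by simpa only [not_forall, SetLike.coe_subset_coe] using hp)

noncomputable def fractionAt {n : ℕ} (f : (I ^ n : Ideal A) →ₗ[A] M)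
    (p : complementZeroLocus A I) : LocalizedModule p.1.asIdeal.primeCompl M :=
  have hx := (exists_mem_pow_notMem_of_mem_complementZeroLocus p.2 n).choose_spec
  LocalizedModule.mk (f ⟨_, hx.1⟩) ⟨_, hx.2⟩

theorem fractionAt_eq {n : ℕ} (f : (I ^ n : Ideal A) →ₗ[A] M) (p : complementZeroLocus A I)
    (x : (I ^ n : Ideal A)) (hx : (x : A) ∉ p.1.asIdeal) :
    fractionAt f p = LocalizedModule.mk (f x) ⟨x.1, hx⟩ :=
  LocalizedModule.mk_apply_eq_mk_apply f _ _

variable (I M) in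
noncomputable def toSections (n : ℕ) :
    ((I ^ n : Ideal A) →ₗ[A] M) →ₗ[A]
      (structurePresheafInModuleCat A M).obj (op (complementZeroLocus A I)) where
  toFun f := ⟨fractionAt f, fun p => by
    obtain ⟨x, hxI, hxp⟩ := exists_mem_pow_notMem_of_mem_complementZeroLocus p.2 n
    exact ⟨complementZeroLocus A I ⊓ PrimeSpectrum.basicOpen x, ⟨p.2, hxp⟩,
      CategoryTheory.homOfLE inf_le_left, f ⟨x, hxI⟩, x,
      fun q => ⟨q.2.2, fractionAt_eq f ⟨q.1, q.2.1⟩ ⟨x, hxI⟩ q.2.2⟩⟩⟩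
  map_add' f g := Subtype.ext <| funext fun p => by
    obtain ⟨x, hxI, hxp⟩ := exists_mem_pow_notMem_of_mem_complementZeroLocus p.2 n
    show fractionAt (f + g) p = fractionAt f p + fractionAt g p
    rw [fractionAt_eq _ p ⟨x, hxI⟩ hxp, fractionAt_eq _ p ⟨x, hxI⟩ hxp,
      fractionAt_eq _ p ⟨x, hxI⟩ hxp, LinearMap.add_apply, LocalizedModule.mk_add_mk, ← smul_add,
      LocalizedModule.mk_cancel_common_left]
  map_smul' r f := Subtype.ext <| funext fun p => by
    obtain ⟨x, hxI, hxp⟩ := exists_mem_pow_notMem_of_mem_complementZeroLocus p.2 n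
    show fractionAt (r • f) p = r • fractionAt f p
    rw [fractionAt_eq _ p ⟨x, hxI⟩ hxp, fractionAt_eq _ p ⟨x, hxI⟩ hxp, LinearMap.smul_apply,
      LocalizedModule.smul'_mk]

theorem toSections_apply {n : ℕ} (f : (I ^ n : Ideal A) →ₗ[A] M) (p : complementZeroLocus A I)
    (x : (I ^ n : Ideal A)) (hx : (x : A) ∉ p.1.asIdeal) :
    (toSections I M n f).1 p = LocalizedModule.mk (f x) ⟨x.1, hx⟩ :=
  fractionAt_eq f p x hx

theorem toSections_extTransition {n m : ℕ} (h : n ≤ m) (f : (I ^ n : Ideal A) →ₗ[A] M) :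
    toSections I M m (extTransition A I M n m h f) = toSections I M n f :=
  Subtype.ext <| funext fun p => by
    obtain ⟨x, hxI, hxp⟩ := exists_mem_pow_notMem_of_mem_complementZeroLocus p.2 m
    rw [toSections_apply _ p ⟨x, hxI⟩ hxp,
      toSections_apply _ p ⟨x, Ideal.pow_le_pow_right h hxI⟩ hxp]
    rfl

theorem exists_extTransition_eq_zero [IsNoetherianRing A] {n : ℕ}
    {f : (I ^ n : Ideal A) →ₗ[A] M}
    (hf : ∀ x (hx : x ∈ I), ∃ k, x ^ k • f ⟨x ^ n, Ideal.pow_mem_pow hx n⟩ = 0) :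
    ∃ m, ∃ h : n ≤ m, extTransition A I M n m h f = 0 := by
  -- `f` vanishes on `K`, and `xⁿ⁺ᵏ ∈ K` for `x ∈ I`.
  set K : Ideal A := (LinearMap.ker f).map (I ^ n).subtype
  have hIK : I ≤ K.radical := fun x hx => by
    obtain ⟨k, hk⟩ := hf x hx
    refine ⟨n + k, ⟨x ^ (n + k), Ideal.pow_le_pow_right (by omega) (Ideal.pow_mem_pow hx _)⟩,
      ?_, rfl⟩
    rw [SetLike.mem_coe, LinearMap.mem_ker, ← hk, ← map_smul]
    exact congrArg f (Subtype.ext (by simp [pow_add, mul_comm]))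
  obtain ⟨e, he⟩ := Ideal.exists_pow_le_of_le_radical_of_fg hIK (IsNoetherian.noetherian I)
  refine ⟨n + e, by omega, LinearMap.ext fun x => ?_⟩
  obtain ⟨y, hy, hyx⟩ := he (Ideal.pow_le_pow_right (by omega) x.2)
  rw [LinearMap.zero_apply, ← LinearMap.mem_ker.mp hy]
  exact congrArg f (Subtype.ext hyx.symm)

theorem exists_extTransition_eq_zero_of_toSections_eq_zero [IsNoetherianRing A] {n : ℕ}
    {f : (I ^ n : Ideal A) →ₗ[A] M} (hf : toSections I M n f = 0) :
    ∃ m, ∃ h : n ≤ m, extTransition A I M n m h f = 0 := by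
  refine exists_extTransition_eq_zero fun x hxI =>
    exists_pow_smul_eq_zero_of_forall_prime fun p hxp => ?_
  have hp := mem_complementZeroLocus_of_mem_of_notMem hxI hxp
  have hxn : x ^ n ∈ p.asIdeal.primeCompl := pow_mem hxp n
  have hzero : (LocalizedModule.mk (f ⟨x ^ n, Ideal.pow_mem_pow hxI n⟩) ⟨x ^ n, hxn⟩ :
      LocalizedModule p.asIdeal.primeCompl M) = 0 :=
    (toSections_apply f ⟨p, hp⟩ ⟨x ^ n, Ideal.pow_mem_pow hxI n⟩ hxn).symm.trans
      (congrArg (fun s => s.1 ⟨p, hp⟩) hf)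
  rw [IsLocalizedModule.mk_eq_mk', IsLocalizedModule.mk'_eq_zero'] at hzero
  obtain ⟨⟨u, hup⟩, hu⟩ := hzero
  exact ⟨u, hup, hu⟩

theorem exists_fintype_iSup_basicOpen_eq_and_eq_mk {U : Opens (PrimeSpectrum A)}
    (hU : IsCompact (U : Set (PrimeSpectrum A)))
    (s : (structurePresheafInModuleCat A M).obj (op U)) :
    ∃ (ι : Type) (_ : Fintype ι) (g : ι → A) (f : ι → M),
      ⨆ i, PrimeSpectrum.basicOpen (g i) = U ∧
        ∀ i (p : U) (hp : g i ∉ p.1.asIdeal), s.1 p = LocalizedModule.mk (f i) ⟨g i, hp⟩ := by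
  choose g hxg hgU f hf using fun x : U => StructureSheaf.exists_const U s x.1 x.2
  obtain ⟨t, ht⟩ := hU.elim_finite_subcover
    (fun x => (PrimeSpectrum.basicOpen (g x) : Set (PrimeSpectrum A)))
    (fun x => (PrimeSpectrum.basicOpen (g x)).2) fun x hx => Set.mem_iUnion.mpr ⟨⟨x, hx⟩, hxg _⟩
  refine ⟨t, inferInstance, fun x => g x, fun x => f x,
    le_antisymm (iSup_le fun x => hgU x) fun p hp => ?_, fun x p hp => ?_⟩
  · obtain ⟨x, hxt, hpx⟩ := Set.mem_iUnion₂.mp (ht hp)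
    exact Opens.mem_iSup.mpr ⟨⟨x, hxt⟩, hpx⟩
  · exact (congrArg (fun t => t.1 ⟨p.1, hp⟩) (hf x)).symm

theorem exists_toSections_eq [IsNoetherianRing A]
    (s : (structurePresheafInModuleCat A M).obj (op (complementZeroLocus A I))) :
    ∃ n f, toSections I M n f = s := by
  obtain ⟨ι, _, g, f, hgU, hs⟩ :=
    exists_fintype_iSup_basicOpen_eq_and_eq_mk (NoetherianSpace.isCompact _) s
  have hcompat (i j : ι) : ∃ k, (g i * g j) ^ k • (g j • f i - g i • f j) = 0 :=
    exists_pow_mul_smul_sub_eq_zero fun p hi hj => by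
      have hp : p ∈ complementZeroLocus A I := hgU ▸ Opens.mem_iSup.mpr ⟨i, hi⟩
      rw [← hs i ⟨p, hp⟩ hi, hs j ⟨p, hp⟩ hj]
  obtain ⟨K, hK⟩ := exists_pow_smul_pow_smul_eq hcompat
  have hb : (Ideal.span (Set.range fun i => g i ^ (K + 1))).radical = I.radical :=
    radical_span_range_eq_of_iSup_basicOpen_eq
      (by simpa only [PrimeSpectrum.basicOpen_pow _ _ K.succ_pos] using hgU)
  obtain ⟨N, F, hF⟩ := exists_linearMap_pow_smul_eq I hb hK
  refine ⟨N, F, Subtype.ext <| funext fun p => ?_⟩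
  obtain ⟨i, hi⟩ := Opens.mem_iSup.mp (hgU.ge p.2)
  obtain ⟨x, hxI, hxp⟩ := exists_mem_pow_notMem_of_mem_complementZeroLocus p.2 N
  rw [toSections_apply F p ⟨x, hxI⟩ hxp, hs i p hi, LocalizedModule.mk_eq]
  refine ⟨⟨g i ^ K, Submonoid.pow_mem _ hi K⟩, ?_⟩
  simp only [Submonoid.smul_def]
  linear_combination (norm := module) hF i ⟨x, hxI⟩

variable (I M) in
noncomputable def directLimitToSections :
    Module.DirectLimit (fun n => (I ^ n : Ideal A) →ₗ[A] M) (extTransition A I M) →ₗ[A]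
      (structurePresheafInModuleCat A M).obj (op (complementZeroLocus A I)) :=
  Module.DirectLimit.lift A ℕ _ _ (toSections I M) fun _ _ h f => toSections_extTransition h f

theorem directLimitToSections_of (n : ℕ) (f : (I ^ n : Ideal A) →ₗ[A] M) :
    directLimitToSections I M (Module.DirectLimit.of A ℕ _ (extTransition A I M) n f) =
      toSections I M n f :=
  Module.DirectLimit.lift_of (toSections I M) _ f

theorem directLimitToSections_injective [IsNoetherianRing A] :
    Function.Injective (directLimitToSections I M) := by
  refine (injective_iff_map_eq_zero _).mpr fun z hz => ?_
  obtain ⟨n, f, rfl⟩ := Module.DirectLimit.exists_of z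
  rw [directLimitToSections_of] at hz
  obtain ⟨m, h, hf⟩ := exists_extTransition_eq_zero_of_toSections_eq_zero hz
  rw [← Module.DirectLimit.of_f (hij := h), hf, map_zero]

theorem directLimitToSections_surjective [IsNoetherianRing A] :
    Function.Surjective (directLimitToSections I M) := fun s => by
  obtain ⟨n, f, rfl⟩ := exists_toSections_eq s
  exact ⟨_, directLimitToSections_of n f⟩

end Sections

/-- Let `A` be a Noetherian commutative ring, `I ⊆ A` an ideal and `M` an
`A`-module.  Let `U ⊆ Spec A` be the open complement of `V(I)` and `M̃` the quasicoherent sheaf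
on `Spec A` associated to `M`.  The restriction maps make `(Hom_A(Iⁿ, M))ₙ` a direct system,
and the map sending the class of `f : Iⁿ → M` to the unique section of `M̃` over `U` whose
restriction to each basic open `D(g)` with `g ∈ I` is `f(gⁿ)/gⁿ` (i.e. whose value at each
prime `p ∈ D(g)` is the fraction `f(gⁿ)/gⁿ ∈ M_p`) is an `A`-module isomorphism
`colimₙ Hom_A(Iⁿ, M) ≅ Γ(U, M̃)`. -/
theorem stmt1 (A : Type) [CommRing A] [IsNoetherianRing A] (I : Ideal A)
    (M : Type) [AddCommGroup M] [Module A M] :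
    -- the transition maps make `(Hom_A(Iⁿ, M))ₙ` a direct system
    DirectedSystem (fun n => (I ^ n : Ideal A) →ₗ[A] M)
      (fun n m h => extTransition A I M n m h) ∧
    -- the colimit of this direct system is `Γ(U, M̃)`, via the map described above
    ∃ e : Module.DirectLimit (fun n => (I ^ n : Ideal A) →ₗ[A] M) (extTransition A I M)
        ≃ₗ[A] ((structurePresheafInModuleCat A M).obj
            (op (complementZeroLocus A I))),
      ∀ (n : ℕ) (f : (I ^ n : Ideal A) →ₗ[A] M)
        (p : PrimeSpectrum A) (hp : p ∈ complementZeroLocus A I)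
        (g : A) (hgI : g ∈ I) (hgp : g ∉ p.asIdeal),
        (e (Module.DirectLimit.of A ℕ (fun n => (I ^ n : Ideal A) →ₗ[A] M)
            (extTransition A I M) n f)).1 ⟨p, hp⟩ =
          LocalizedModule.mk (f ⟨g ^ n, Ideal.pow_mem_pow hgI n⟩)
            ⟨g ^ n, pow_mem hgp n⟩ := by
  refine ⟨⟨fun _ _ => rfl, fun _ _ _ _ _ _ => rfl⟩, LinearEquiv.ofBijective
    (directLimitToSections I M) ⟨directLimitToSections_injective, directLimitToSections_surjective⟩,
    fun n f p hp g hgI hgp => ?_⟩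
  exact (congrArg (fun s => s.1 ⟨p, hp⟩) (directLimitToSections_of n f)).trans
    (toSections_apply f ⟨p, hp⟩ ⟨g ^ n, Ideal.pow_mem_pow hgI n⟩ _)
end

section
/- Let A → B be a finite étale homomorphism of commutative rings (so B is a finitely generated projective A-module). For every A-module I, the map B ⊗_A I → Hom_A(B, I) sending b ⊗ i to the A-linear map c ↦ Tr_{B/A}(bc) · i is an isomorphism of B-modules, where Tr_{B/A}(d) denotes the trace of the A-linear endomorphism of B given by multiplication by d, and Hom_A(B, I) is a B-module via (b · f)(c) = f(bc). -/
/-!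
Since `B` is unramified over `A`, there is a separability element `t = ∑ xⱼ ⊗ yⱼ` in `B ⊗[A] B`:
`∑ xⱼ yⱼ = 1` and `(x ⊗ 1) t = (1 ⊗ x) t` for all `x`. Writing the trace through a finite dual basis
`(fᵢ, gᵢ)` of `B` as `Tr d = ∑ gᵢ (d fᵢ)`, the relation moves each `b fᵢ` across the tensor sign,
which yields the dual-basis identity `∑ⱼ Tr (b xⱼ) yⱼ = b`; the same holds for the flipped element
`∑ yⱼ ⊗ xⱼ`. These two identities say exactly that `φ ↦ ∑ xⱼ ⊗ φ yⱼ` is a two-sided inverse of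
`b ⊗ i ↦ (c ↦ Tr (b c) • i)`.
-/

open TensorProduct

theorem LinearMap.trace_pi_eq_sum {A : Type*} [CommRing A] {n : ℕ}
    (f : (Fin n → A) →ₗ[A] (Fin n → A)) :
    LinearMap.trace A (Fin n → A) f = ∑ i, f (Pi.single i 1) i := by
  rw [LinearMap.trace_eq_matrix_trace A (Pi.basisFun A (Fin n)), Matrix.trace]
  simp

theorem LinearMap.sum_smul_map_single_of_comp_eq_id {A M : Type*} [CommRing A] [AddCommGroup M]
    [Module A M] {n : ℕ} {s : M →ₗ[A] (Fin n → A)} {r : (Fin n → A) →ₗ[A] M}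
    (hrs : r ∘ₗ s = LinearMap.id) (u : M) :
    ∑ i, s u i • r (Pi.single i 1) = u := by
  calc ∑ i, s u i • r (Pi.single i 1) = r (∑ i, Pi.single i (s u i)) := by
        simp only [map_sum, ← map_smul, ← Pi.single_smul', smul_eq_mul, mul_one]
    _ = u := by rw [Finset.univ_sum_single, ← LinearMap.comp_apply, hrs, LinearMap.id_apply]

section Separability

variable {A B : Type*} [CommRing A] [CommRing B] [Algebra A B]

structure IsSeparabilityElement (t : B ⊗[A] B) : Prop where
  lmul'_eq_one : Algebra.TensorProduct.lmul' A t = 1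
  tmul_one_mul_eq_one_tmul_mul : ∀ x : B, (x ⊗ₜ[A] 1) * t = (1 ⊗ₜ x) * t

theorem exists_isSeparabilityElement [Algebra.EssFiniteType A B]
    [Algebra.FormallyUnramified A B] : ∃ t : B ⊗[A] B, IsSeparabilityElement t := by
  obtain ⟨t, ht, h1⟩ := Algebra.FormallyUnramified.iff_exists_tensorProduct.mp ‹_›
  exact ⟨t, h1, fun x => by rw [← sub_eq_zero, ← sub_mul, ← neg_sub, neg_mul, ht, neg_zero]⟩

theorem Algebra.TensorProduct.lmul'_comm (w : B ⊗[A] B) :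
    Algebra.TensorProduct.lmul' A (Algebra.TensorProduct.comm A B B w) =
      Algebra.TensorProduct.lmul' A w := by
  induction w using TensorProduct.induction_on with
  | zero => simp
  | tmul x y => simp [mul_comm]
  | add w₁ w₂ ih₁ ih₂ => simp only [map_add, ih₁, ih₂]

theorem IsSeparabilityElement.comm {t : B ⊗[A] B} (ht : IsSeparabilityElement t) :
    IsSeparabilityElement (Algebra.TensorProduct.comm A B B t) where
  lmul'_eq_one := by rw [Algebra.TensorProduct.lmul'_comm, ht.lmul'_eq_one]
  tmul_one_mul_eq_one_tmul_mul x := by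
    simpa using congrArg (Algebra.TensorProduct.comm A B B) (ht.tmul_one_mul_eq_one_tmul_mul x).symm

noncomputable def contractFst (φ : B →ₗ[A] A) : B ⊗[A] B →ₗ[A] B :=
  TensorProduct.lift (LinearMap.lsmul A B ∘ₗ φ)

@[simp]
theorem contractFst_tmul (φ : B →ₗ[A] A) (x y : B) : contractFst φ (x ⊗ₜ y) = φ x • y := rfl

theorem contractFst_one_tmul_mul (φ : B →ₗ[A] A) (c : B) (w : B ⊗[A] B) :
    contractFst φ ((1 ⊗ₜ c) * w) = c * contractFst φ w := by
  induction w using TensorProduct.induction_on with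
  | zero => simp
  | tmul x y => simp
  | add w₁ w₂ ih₁ ih₂ => simp [mul_add, ih₁, ih₂]

theorem contractFst_tmul_one_mul (φ : B →ₗ[A] A) (c : B) (w : B ⊗[A] B) :
    contractFst φ ((c ⊗ₜ 1) * w) = contractFst (φ ∘ₗ LinearMap.mulLeft A c) w := by
  induction w using TensorProduct.induction_on with
  | zero => simp
  | tmul x y => simp
  | add w₁ w₂ ih₁ ih₂ => simp [mul_add, ih₁, ih₂]

theorem contractFst_sum {ι : Type*} (s : Finset ι) (φ : ι → B →ₗ[A] A) (w : B ⊗[A] B) :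
    contractFst (∑ i ∈ s, φ i) w = ∑ i ∈ s, contractFst (φ i) w := by
  induction w using TensorProduct.induction_on with
  | zero => simp
  | tmul x y => simp [Finset.sum_smul]
  | add w₁ w₂ ih₁ ih₂ => simp [ih₁, ih₂, Finset.sum_add_distrib]

theorem sum_mul_contractFst_of_dual_basis {n : ℕ} {f : Fin n → B} {g : Fin n → B →ₗ[A] A}
    (hfg : ∀ u, ∑ i, g i u • f i = u) (w : B ⊗[A] B) :
    ∑ i, f i * contractFst (g i) w = Algebra.TensorProduct.lmul' A w := by
  induction w using TensorProduct.induction_on with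
  | zero => simp
  | tmul x y =>
    simp only [contractFst_tmul, mul_smul_comm, Algebra.TensorProduct.lmul'_apply_tmul]
    simp_rw [← smul_mul_assoc, ← Finset.sum_mul, hfg]
  | add w₁ w₂ ih₁ ih₂ => simp [mul_add, ih₁, ih₂, Finset.sum_add_distrib]

theorem IsSeparabilityElement.contractFst_trace_comp_mulLeft {t : B ⊗[A] B}
    (ht : IsSeparabilityElement t) {n : ℕ} {f : Fin n → B} {g : Fin n → B →ₗ[A] A}
    (hfg : ∀ u, ∑ i, g i u • f i = u) {Tr : B →ₗ[A] A} (hTr : ∀ d, Tr d = ∑ i, g i (d * f i))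
    (b : B) : contractFst (Tr ∘ₗ LinearMap.mulLeft A b) t = b := by
  have hTr_b : Tr ∘ₗ LinearMap.mulLeft A b = ∑ i, g i ∘ₗ LinearMap.mulLeft A (b * f i) := by
    ext x
    simp only [LinearMap.comp_apply, LinearMap.mulLeft_apply, hTr, LinearMap.sum_apply]
    exact Finset.sum_congr rfl fun i _ => by ring_nf
  calc contractFst (Tr ∘ₗ LinearMap.mulLeft A b) t
      = ∑ i, contractFst (g i) ((1 ⊗ₜ (b * f i)) * t) := by
        simp only [hTr_b, contractFst_sum, ← ht.tmul_one_mul_eq_one_tmul_mul,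
          contractFst_tmul_one_mul]
    _ = b * ∑ i, f i * contractFst (g i) t := by
        simp only [contractFst_one_tmul_mul, Finset.mul_sum, mul_assoc]
    _ = b := by rw [sum_mul_contractFst_of_dual_basis hfg, ht.lmul'_eq_one, mul_one]

end Separability

section TraceTensorHom

variable {A B : Type*} [CommRing A] [CommRing B] [Algebra A B]
  (Tr : B →ₗ[A] A) (I : Type*) [AddCommGroup I] [Module A I]

noncomputable def traceTensorHom : B ⊗[A] I →ₗ[A] (B →ₗ[A] I) :=
  TensorProduct.lift (LinearMap.smulRightₗ ∘ₗ (LinearMap.mul A B).compr₂ Tr)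

variable {Tr I}

@[simp]
theorem traceTensorHom_tmul_apply (b : B) (i : I) (c : B) :
    traceTensorHom Tr I (b ⊗ₜ i) c = Tr (b * c) • i := rfl

theorem traceTensorHom_smul_apply (b : B) (z : B ⊗[A] I) (c : B) :
    traceTensorHom Tr I (b • z) c = traceTensorHom Tr I z (b * c) := by
  induction z using TensorProduct.induction_on with
  | zero => simp
  | tmul x i =>
    simp only [smul_tmul', smul_eq_mul, traceTensorHom_tmul_apply, mul_assoc, mul_left_comm x b c]
  | add z₁ z₂ ih₁ ih₂ => simp only [smul_add, map_add, LinearMap.add_apply, ih₁, ih₂]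

theorem traceTensorHom_lTensor_apply (φ : B →ₗ[A] I) (w : B ⊗[A] B) (c : B) :
    traceTensorHom Tr I (φ.lTensor B w) c = φ (contractFst (Tr ∘ₗ LinearMap.mulLeft A c) w) := by
  induction w using TensorProduct.induction_on with
  | zero => simp
  | tmul x y => simp [mul_comm]
  | add w₁ w₂ ih₁ ih₂ => simp only [map_add, LinearMap.add_apply, ih₁, ih₂]

theorem lTensor_traceTensorHom_tmul (b : B) (i : I) (w : B ⊗[A] B) :
    (traceTensorHom Tr I (b ⊗ₜ i)).lTensor B w =
      contractFst (Tr ∘ₗ LinearMap.mulLeft A b) (Algebra.TensorProduct.comm A B B w) ⊗ₜ i := by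
  induction w using TensorProduct.induction_on with
  | zero => simp
  | tmul x y => simp [smul_tmul]
  | add w₁ w₂ ih₁ ih₂ => simp only [map_add, ih₁, ih₂, add_tmul]

theorem traceTensorHom_bijective {t : B ⊗[A] B}
    (ht : ∀ b, contractFst (Tr ∘ₗ LinearMap.mulLeft A b) t = b)
    (ht' : ∀ b, contractFst (Tr ∘ₗ LinearMap.mulLeft A b) (Algebra.TensorProduct.comm A B B t) = b) :
    Function.Bijective (traceTensorHom Tr I) :=
  have inv_right : traceTensorHom Tr I ∘ₗ (LinearMap.lTensorHom B).flip t = LinearMap.id :=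
    LinearMap.ext fun φ => LinearMap.ext fun c => by simp [traceTensorHom_lTensor_apply, ht]
  have inv_left : (LinearMap.lTensorHom B).flip t ∘ₗ traceTensorHom Tr I = LinearMap.id :=
    TensorProduct.ext' fun b i => by simp [lTensor_traceTensorHom_tmul, ht']
  Function.bijective_iff_has_inverse.mpr
    ⟨(LinearMap.lTensorHom B).flip t, LinearMap.congr_fun inv_left, LinearMap.congr_fun inv_right⟩

end TraceTensorHom

theorem stmt2_general (A B : Type) [CommRing A] [CommRing B] [Algebra A B]
    [Algebra.Etale A B]
    -- a presentation of `B` as a direct summand of a finite free `A`-module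
    (n : ℕ) (s : B →ₗ[A] (Fin n → A)) (r : (Fin n → A) →ₗ[A] B)
    (hrs : r ∘ₗ s = LinearMap.id)
    -- the trace form: `Tr d` is the trace of multiplication by `d` on `B`
    (Tr : B →ₗ[A] A)
    (hTr : ∀ d : B, Tr d =
      LinearMap.trace A (Fin n → A) (s ∘ₗ (LinearMap.mulLeft A d) ∘ₗ r))
    (I : Type) [AddCommGroup I] [Module A I]
    (Θ : B ⊗[A] I →ₗ[A] (B →ₗ[A] I))
    (hΘ : ∀ (b : B) (i : I) (c : B), Θ (b ⊗ₜ[A] i) c = Tr (b * c) • i) :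
    Function.Bijective Θ ∧ ∀ (b : B) (t : B ⊗[A] I) (c : B), Θ (b • t) c = Θ t (b * c) := by
  obtain rfl : Θ = traceTensorHom Tr I := TensorProduct.ext' fun b i => LinearMap.ext (hΘ b i)
  have hTr_sum : ∀ d, Tr d = ∑ i, (LinearMap.proj i ∘ₗ s) (d * r (Pi.single i 1)) := by
    simp [hTr, LinearMap.trace_pi_eq_sum]
  have hdual := LinearMap.sum_smul_map_single_of_comp_eq_id hrs
  obtain ⟨t, ht⟩ := exists_isSeparabilityElement (A := A) (B := B)
  exact ⟨traceTensorHom_bijective (ht.contractFst_trace_comp_mulLeft hdual hTr_sum)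
    (ht.comm.contractFst_trace_comp_mulLeft hdual hTr_sum), traceTensorHom_smul_apply⟩

/-- Let `A → B` be a finite étale homomorphism of commutative rings (so `B` is a
finitely generated projective `A`-module; we witness this by a retraction `r ∘ s = id` of a finite
free module, which also lets us express the trace `Tr_{B/A}` of multiplication operators).
For every `A`-module `I`, the map `B ⊗[A] I → Hom_A(B, I)`, `b ⊗ i ↦ (c ↦ Tr_{B/A}(b*c) • i)`,
is an isomorphism of `B`-modules, where `Hom_A(B, I)` is a `B`-module via `(b • f) c = f (b * c)`
(the `B`-linearity is expressed by the equation `Θ (b • t) c = Θ t (b * c)`). -/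
theorem stmt2 (A B : Type) [CommRing A] [CommRing B] [Algebra A B]
    [Module.Finite A B] [Algebra.Etale A B]
    -- a presentation of `B` as a direct summand of a finite free `A`-module
    (n : ℕ) (s : B →ₗ[A] (Fin n → A)) (r : (Fin n → A) →ₗ[A] B)
    (hrs : r ∘ₗ s = LinearMap.id)
    -- the trace form: `Tr d` is the trace of multiplication by `d` on `B`
    (Tr : B →ₗ[A] A)
    (hTr : ∀ d : B, Tr d =
      LinearMap.trace A (Fin n → A) (s ∘ₗ (LinearMap.mulLeft A d) ∘ₗ r))
    (I : Type) [AddCommGroup I] [Module A I]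
    (Θ : B ⊗[A] I →ₗ[A] (B →ₗ[A] I))
    (hΘ : ∀ (b : B) (i : I) (c : B), Θ (b ⊗ₜ[A] i) c = Tr (b * c) • i) :
    Function.Bijective Θ ∧ ∀ (b : B) (t : B ⊗[A] I) (c : B), Θ (b • t) c = Θ t (b * c) :=
  stmt2_general A B n s r hrs Tr hTr I Θ hΘ
end

section
/- Let A be a commutative ring and G a finite group whose order is invertible in A. Let B be a commutative A-algebra on which G acts by A-algebra automorphisms, and let M be a B-module equipped with an additive G-action satisfying g•(b·m) = (g•b)·(g•m) for all g ∈ G, b ∈ B, m ∈ M. Let I be any A-module. Make Hom_A(B, I) a B-module by (b·f)(c) = f(bc) and let G act on it by (g•f)(c) = f(g⁻¹•c). Let M^G = {m ∈ M : g•m = m for all g ∈ G}, an A-submodule of M. Then the map sending a G-equivariant B-linear map φ : M → Hom_A(B, I) to the A-linear map M^G → I, m ↦ φ(m)(1_B), is an isomorphism of A-modules Hom_B^G(M, Hom_A(B, I)) ≅ Hom_A(M^G, I). -/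
/-!
Since `|G|` is invertible in `A`, the Reynolds operator `P m = |G|⁻¹ ∑ g • m` is an `A`-linear
projection of `M` onto `M^G`, and every `G`-invariant `A`-linear map out of `M` factors through
it. Given `ψ`, the map `φ m c = ψ (P (c • m))` is `B`-linear and equivariant and restricts to
`ψ`. Conversely, for any such `φ` we have `φ m c = φ (c • m) 1`, and `m ↦ φ m 1` is
`G`-invariant because `g⁻¹` fixes `1 ∈ B`; hence `φ m c = φ (P (c • m)) 1 = ψ (P (c • m))`.
-/

/-- The (multiplicative) group structure on `M ≃+ M` that older Mathlib provided via `AddAut`: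
multiplication is composition. -/
instance addEquivSelfGroupOld (M : Type) [Add M] : Group (M ≃+ M) where
  mul g h := AddEquiv.trans h g
  one := AddEquiv.refl _
  inv := AddEquiv.symm
  mul_assoc _ _ _ := rfl
  one_mul _ := rfl
  mul_one _ := rfl
  inv_mul_cancel := AddEquiv.self_trans_symm

/-- The `A`-submodule of `G`-invariant elements `M^G` of a `B`-module `M` with a compatible
`G`-action (`G` acting on the `A`-algebra `B` by `A`-algebra automorphisms `ρ`). -/
def invariantsSubmodule (A : Type) [CommRing A] {G : Type} [Group G]
    {B : Type} [CommRing B] [Algebra A B] (ρ : G →* (B ≃ₐ[A] B))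
    {M : Type} [AddCommGroup M] [Module A M] [Module B M] [IsScalarTower A B M]
    (act : G →* (M ≃+ M))
    (hcompat : ∀ (g : G) (b : B) (m : M), act g (b • m) = (ρ g b) • (act g m)) :
    Submodule A M where
  carrier := {m : M | ∀ g : G, act g m = m}
  add_mem' := by
    intro m₁ m₂ h₁ h₂ g
    rw [map_add, h₁ g, h₂ g]
  zero_mem' := by
    intro g
    exact map_zero _
  smul_mem' := by
    intro a m hm g
    rw [← algebraMap_smul B a m, hcompat, AlgEquiv.commutes, hm g]

namespace Representation

variable {k G V W : Type*} [CommRing k] [Group G] [Fintype G] [Invertible (Fintype.card G : k)]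
  [AddCommGroup V] [Module k V] [AddCommGroup W] [Module k W] (σ : Representation k G V)

theorem averageMap_apply (v : V) :
    σ.averageMap v = ⅟(Fintype.card G : k) • ∑ g : G, σ g v := by
  simp [GroupAlgebra.average, map_sum]

theorem averageMap_comp (g : G) : σ.averageMap ∘ₗ σ g = σ.averageMap := by
  ext v
  rw [LinearMap.comp_apply, averageMap_apply, averageMap_apply]
  congr 1
  exact Fintype.sum_equiv (Equiv.mulRight g) _ _ fun h => by
    rw [Equiv.coe_mulRight, map_mul, Module.End.mul_apply]

theorem comp_averageMap_of_invariant {f : V →ₗ[k] W} (hf : ∀ g, f ∘ₗ σ g = f) :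
    f ∘ₗ σ.averageMap = f := by
  ext v
  have hfg (g : G) : f (σ g v) = f v := LinearMap.congr_fun (hf g) v
  simp only [LinearMap.comp_apply, averageMap_apply, map_smul, map_sum, hfg, Finset.sum_const,
    Finset.card_univ, ← Nat.cast_smul_eq_nsmul k, smul_smul, invOf_mul_self, one_smul]

end Representation

section Invariants

variable {A : Type} [CommRing A] {G : Type} [Group G] {B : Type} [CommRing B] [Algebra A B]
  {ρ : G →* (B ≃ₐ[A] B)} {M : Type} [AddCommGroup M] [Module A M] [Module B M]
  [IsScalarTower A B M] {act : G →* (M ≃+ M)}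

theorem act_smul_of_compat
    (hcompat : ∀ (g : G) (b : B) (m : M), act g (b • m) = (ρ g b) • (act g m))
    (g : G) (a : A) (m : M) : act g (a • m) = a • act g m := by
  rw [← algebraMap_smul B a m, hcompat, AlgEquiv.commutes, algebraMap_smul]

variable (A ρ act) in
def actRepresentation
    (hcompat : ∀ (g : G) (b : B) (m : M), act g (b • m) = (ρ g b) • (act g m)) :
    Representation A G M where
  toFun g := { toFun := act g, map_add' := map_add _, map_smul' := act_smul_of_compat hcompat g }
  map_one' := by ext m; simp only [map_one]; rfl
  map_mul' g h := by ext m; simp only [map_mul]; rfl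

variable (hcompat : ∀ (g : G) (b : B) (m : M), act g (b • m) = (ρ g b) • (act g m))
  [Fintype G] [Invertible (Fintype.card G : A)]

/-- The Reynolds operator `m ↦ |G|⁻¹ ∑ g • m`. The codomain restriction typechecks because
`invariantsSubmodule` is definitionally the submodule of invariants of `actRepresentation`. -/
noncomputable def invariantsProj : M →ₗ[A] invariantsSubmodule A ρ act hcompat :=
  (actRepresentation A ρ act hcompat).averageMap.codRestrict _
    (actRepresentation A ρ act hcompat).averageMap_invariant

theorem invariantsProj_act (g : G) (m : M) :
    invariantsProj hcompat (act g m) = invariantsProj hcompat m :=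
  Subtype.ext <| LinearMap.congr_fun ((actRepresentation A ρ act hcompat).averageMap_comp g) m

theorem invariantsProj_coe (m : invariantsSubmodule A ρ act hcompat) :
    invariantsProj hcompat (m : M) = m :=
  Subtype.ext <| (actRepresentation A ρ act hcompat).averageMap_id m m.2

theorem comp_invariantsProj_of_invariant {N : Type} [AddCommGroup N] [Module A N] {f : M →ₗ[A] N}
    (hf : ∀ (g : G) (m : M), f (act g m) = f m) :
    f ∘ₗ (invariantsSubmodule A ρ act hcompat).subtype ∘ₗ invariantsProj hcompat = f :=
  (actRepresentation A ρ act hcompat).comp_averageMap_of_invariant fun g => LinearMap.ext (hf g)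

variable {I : Type} [AddCommGroup I] [Module A I]

/-- The map `Hom_A(M^G, I) → Hom_B^G(M, Hom_A(B, I))` inverse to `φ ↦ (m ↦ φ m 1)`. -/
noncomputable def liftOfInvariants (ψ : invariantsSubmodule A ρ act hcompat →ₗ[A] I) :
    M →ₗ[A] B →ₗ[A] I :=
  (Algebra.lsmul A A M).toLinearMap.flip.compr₂ (ψ ∘ₗ invariantsProj hcompat)

theorem liftOfInvariants_apply (ψ : invariantsSubmodule A ρ act hcompat →ₗ[A] I) (m : M) (c : B) :
    liftOfInvariants hcompat ψ m c = ψ (invariantsProj hcompat (c • m)) := rfl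

theorem liftOfInvariants_smul_apply (ψ : invariantsSubmodule A ρ act hcompat →ₗ[A] I)
    (b : B) (m : M) (c : B) :
    liftOfInvariants hcompat ψ (b • m) c = liftOfInvariants hcompat ψ m (b * c) := by
  rw [liftOfInvariants_apply, liftOfInvariants_apply, smul_smul, mul_comm]

theorem liftOfInvariants_act_apply (ψ : invariantsSubmodule A ρ act hcompat →ₗ[A] I)
    (g : G) (m : M) (c : B) :
    liftOfInvariants hcompat ψ (act g m) c = liftOfInvariants hcompat ψ m (ρ g⁻¹ c) := by
  have hc : c • act g m = act g (ρ g⁻¹ c • m) := by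
    rw [hcompat, ← AlgEquiv.mul_apply, ← map_mul, mul_inv_cancel, map_one, AlgEquiv.one_apply]
  rw [liftOfInvariants_apply, liftOfInvariants_apply, hc, invariantsProj_act]

theorem liftOfInvariants_apply_one (ψ : invariantsSubmodule A ρ act hcompat →ₗ[A] I)
    (m : invariantsSubmodule A ρ act hcompat) : liftOfInvariants hcompat ψ m 1 = ψ m := by
  rw [liftOfInvariants_apply, one_smul, invariantsProj_coe]

theorem eq_liftOfInvariants {φ : M →ₗ[A] B →ₗ[A] I}
    (hsmul : ∀ (b : B) (m : M) (c : B), φ (b • m) c = φ m (b * c))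
    (hact : ∀ (g : G) (m : M) (c : B), φ (act g m) c = φ m (ρ g⁻¹ c)) :
    φ = liftOfInvariants hcompat (φ.flip 1 ∘ₗ (invariantsSubmodule A ρ act hcompat).subtype) := by
  have hinv : φ.flip 1 ∘ₗ (invariantsSubmodule A ρ act hcompat).subtype ∘ₗ
      invariantsProj hcompat = φ.flip 1 :=
    comp_invariantsProj_of_invariant hcompat fun g m => by
      simp only [LinearMap.flip_apply, hact, map_one]
  ext m c
  calc φ m c = φ.flip 1 (c • m) := by rw [LinearMap.flip_apply, hsmul, mul_one]
    _ = _ := (LinearMap.congr_fun hinv (c • m)).symm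

end Invariants

/-- Let `A` be a commutative ring and `G` a finite group whose order is invertible
in `A`.  Let `B` be a commutative `A`-algebra on which `G` acts by `A`-algebra automorphisms `ρ`,
and `M` a `B`-module with an additive `G`-action `act` satisfying `g • (b • m) = (g • b) • (g • m)`.
Let `I` be any `A`-module.  Make `Hom_A(B, I)` a `B`-module by `(b • f) c = f (b * c)` and let `G`
act by `(g • f) c = f (g⁻¹ • c)`.  Then the map sending a `G`-equivariant `B`-linear map
`φ : M → Hom_A(B, I)` to the `A`-linear map `M^G → I`, `m ↦ φ m 1`, is an isomorphism of
`A`-modules `Hom_B^G(M, Hom_A(B, I)) ≅ Hom_A(M^G, I)`; i.e. for each `ψ : M^G →ₗ[A] I` there is a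
unique `B`-linear `G`-equivariant `φ` with `φ m 1 = ψ m` for all `m ∈ M^G`. -/
theorem stmt3 (A : Type) [CommRing A] (G : Type) [Group G] [Finite G]
    (hord : IsUnit ((Nat.card G : A)))
    (B : Type) [CommRing B] [Algebra A B] (ρ : G →* (B ≃ₐ[A] B))
    (M : Type) [AddCommGroup M] [Module A M] [Module B M] [IsScalarTower A B M]
    (act : G →* (M ≃+ M))
    (hcompat : ∀ (g : G) (b : B) (m : M), act g (b • m) = (ρ g b) • (act g m))
    (I : Type) [AddCommGroup I] [Module A I]
    (ψ : (invariantsSubmodule A ρ act hcompat) →ₗ[A] I) :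
    ∃! φ : M →ₗ[A] (B →ₗ[A] I),
      (∀ (b : B) (m : M) (c : B), φ (b • m) c = φ m (b * c)) ∧
      (∀ (g : G) (m : M) (c : B), φ (act g m) c = φ m (ρ g⁻¹ c)) ∧
      (∀ m : (invariantsSubmodule A ρ act hcompat), φ m 1 = ψ m) := by
  let _ := Fintype.ofFinite G
  have hcard : IsUnit (Fintype.card G : A) := by rwa [← Nat.card_eq_fintype_card]
  let _ := hcard.invertible
  refine ⟨liftOfInvariants hcompat ψ, ⟨liftOfInvariants_smul_apply hcompat ψ,
    liftOfInvariants_act_apply hcompat ψ, liftOfInvariants_apply_one hcompat ψ⟩, ?_⟩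
  rintro φ ⟨hsmul, hact, hψ⟩
  rw [eq_liftOfInvariants hcompat hsmul hact]
  congr
  exact LinearMap.ext hψ
end

section
/- Let k be a field, a a positive integer, and ζ ∈ k a primitive a-th root of unity. Let B = k[x,y]/(xy). Let i and j be integers coprime to a, and let σ be the unique k-algebra automorphism of B with σ(x) = ζ^i x and σ(y) = ζ^j y (it satisfies σ^a = id). Let A = B^{⟨σ⟩} = {b ∈ B : σ(b) = b} be the invariant subalgebra, and define E : B → A by E(b) = a⁻¹ ∑_{n=0}^{a−1} σ^n(b). Then the map Θ : B → Hom_A(B, A) defined by Θ(b)(c) = E(bc) is an isomorphism of B-modules (where Hom_A(B,A) is a B-module via (b·f)(c) = f(bc)), and Θ is σ-equivariant: Θ(σ(b))(c) = Θ(b)(σ⁻¹(c)) for all b, c ∈ B. -/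
/-!
Restricting to the two branches embeds `B = k[x,y]/(xy)` into `k[x] × k[y]`, and `B` is spanned
over `k` by the monomials `x^m`, `y^m`, on which `σ` acts by the primitive roots `ζ^(i m)`,
`ζ^(j m)`. So the averaging operator `E` keeps exactly the monomials whose degree is divisible
by `a`. If `E (d c) = 0` for all `c`, then testing against `c = x^r` with `a ∣ t + r` kills the
`t`-th coefficient of `d` on the `x`-branch, and likewise on the `y`-branch, so `d = 0`.
Conversely, let `f : B → A` be `A`-linear. For `0 < r < a`, `f (x^r)` is invariant and killed by
`y^a`, hence `f (x^r) = x^a t_r` with `t_r ∈ A`, and similarly `f (y^r) = y^a t'_r`. Then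
`b = f 1 + ∑ r, (x^(a-r) t_r + y^(a-r) t'_r)` satisfies `E (b c) = f c` on the generators
`x^m`, `y^m` (`m < a`) of `B` as an `A`-module, hence everywhere. Equivariance is `E ∘ σ = E`,
which holds because `σ^a = 1`.
-/

open MvPolynomial

/-- The affine node `B = k[x,y]/(xy)`. -/
abbrev NodeRing (k : Type) [Field k] : Type :=
  MvPolynomial (Fin 2) k ⧸ (Ideal.span {(X 0 * X 1 : MvPolynomial (Fin 2) k)})

/-- The class of `x` in `k[x,y]/(xy)`. -/
noncomputable def nodeX (k : Type) [Field k] : NodeRing k :=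
  Ideal.Quotient.mk _ (X 0)

/-- The class of `y` in `k[x,y]/(xy)`. -/
noncomputable def nodeY (k : Type) [Field k] : NodeRing k :=
  Ideal.Quotient.mk _ (X 1)

section OrbitAverage

variable {k R : Type*} [Field k] [Ring R] [Algebra k R] (σ : R ≃ₐ[k] R) (a : ℕ)

noncomputable def orbitAverage : R →ₗ[k] R :=
  (a : k)⁻¹ • ∑ n ∈ Finset.range a, (σ ^ n).toLinearMap

variable {σ a}

theorem orbitAverage_apply (b : R) :
    orbitAverage σ a b = (a : k)⁻¹ • ∑ n ∈ Finset.range a, (σ ^ n) b := by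
  simp [orbitAverage, LinearMap.sum_apply]

theorem AlgEquiv.pow_apply_of_apply_eq_smul {z : R} {w : k} (hz : σ z = w • z) (n : ℕ) :
    (σ ^ n) z = w ^ n • z := by
  induction n with
  | zero => simp
  | succ n ih => rw [pow_succ', AlgEquiv.mul_apply, ih, map_smul, hz, smul_smul, pow_succ]

theorem AlgEquiv.pow_apply_of_fixed {s : R} (hs : σ s = s) (n : ℕ) : (σ ^ n) s = s := by
  simpa using AlgEquiv.pow_apply_of_apply_eq_smul (σ := σ) (w := (1 : k)) (z := s)
    (by rwa [one_smul]) n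

theorem orbitAverage_mul_of_fixed {s : R} (hs : σ s = s) (b : R) :
    orbitAverage σ a (s * b) = s * orbitAverage σ a b := by
  simp only [orbitAverage_apply, map_mul, AlgEquiv.pow_apply_of_fixed hs, ← Finset.mul_sum,
    mul_smul_comm]

theorem orbitAverage_eq_self_of_fixed (ha : (a : k) ≠ 0) {s : R} (hs : σ s = s) :
    orbitAverage σ a s = s := by
  simp only [orbitAverage_apply, AlgEquiv.pow_apply_of_fixed hs, Finset.sum_const,
    Finset.card_range]
  rw [← Nat.cast_smul_eq_nsmul k, smul_smul, inv_mul_cancel₀ ha, one_smul]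

theorem orbitAverage_eq_zero_of_apply_eq_smul {z : R} {w : k} (hw : w ^ a = 1) (hw1 : w ≠ 1)
    (hz : σ z = w • z) : orbitAverage σ a z = 0 := by
  simp only [orbitAverage_apply, AlgEquiv.pow_apply_of_apply_eq_smul hz, ← Finset.sum_smul,
    geom_sum_eq hw1, hw, sub_self, zero_div, zero_smul, smul_zero]

theorem map_orbitAverage (b : R) : σ (orbitAverage σ a b) = orbitAverage σ a (σ b) := by
  simp only [orbitAverage_apply, map_smul, map_sum, ← AlgEquiv.mul_apply, ← pow_succ,
    ← pow_succ']

theorem orbitAverage_map (h : σ ^ a = 1) (b : R) :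
    orbitAverage σ a (σ b) = orbitAverage σ a b := by
  have hshift := Finset.sum_range_succ' (fun n => (σ ^ n) b) a
  rw [Finset.sum_range_succ, h] at hshift
  simp only [orbitAverage_apply, ← AlgEquiv.mul_apply, ← pow_succ]
  rw [add_right_cancel hshift.symm]

end OrbitAverage

section Node

variable (k : Type) [Field k]

noncomputable def nodeVar (l : Fin 2) : NodeRing k :=
  Ideal.Quotient.mk _ (X l)

noncomputable def nodeEval (l : Fin 2) : NodeRing k →ₐ[k] Polynomial k :=
  Ideal.Quotient.liftₐ _ (aeval (Pi.single l Polynomial.X)) (by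
    intro p hp
    obtain ⟨q, rfl⟩ := Ideal.mem_span_singleton.mp hp
    fin_cases l <;> simp)

variable {k}

theorem nodeVar_mul_nodeVar_of_ne {l l' : Fin 2} (h : l ≠ l') :
    nodeVar k l * nodeVar k l' = 0 := by
  rw [nodeVar, nodeVar, ← map_mul, Ideal.Quotient.eq_zero_iff_mem]
  fin_cases l <;> fin_cases l' <;> simp at h
  · exact Ideal.subset_span rfl
  · rw [mul_comm]
    exact Ideal.subset_span rfl

theorem nodeVar_pow_mul_pow_of_ne {l l' : Fin 2} (h : l ≠ l') {m n : ℕ} (hm : m ≠ 0)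
    (hn : n ≠ 0) : nodeVar k l ^ m * nodeVar k l' ^ n = 0 := by
  obtain ⟨m, rfl⟩ := Nat.exists_eq_succ_of_ne_zero hm
  obtain ⟨n, rfl⟩ := Nat.exists_eq_succ_of_ne_zero hn
  rw [pow_succ, pow_succ, mul_mul_mul_comm, nodeVar_mul_nodeVar_of_ne h, mul_zero]

theorem NodeRing.algHom_ext {S : Type*} [Semiring S] [Algebra k S] {f g : NodeRing k →ₐ[k] S}
    (h : ∀ l, f (nodeVar k l) = g (nodeVar k l)) : f = g :=
  Ideal.Quotient.algHom_ext _ (MvPolynomial.algHom_ext h)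

@[simp]
theorem nodeEval_nodeVar_self (l : Fin 2) : nodeEval k l (nodeVar k l) = Polynomial.X := by
  change aeval (Pi.single l Polynomial.X) (X l) = _
  simp

@[simp]
theorem nodeEval_nodeVar_of_ne {l l' : Fin 2} (h : l' ≠ l) :
    nodeEval k l (nodeVar k l') = 0 := by
  change aeval (Pi.single l Polynomial.X) (X l') = 0
  simp [h]

@[simp]
theorem nodeEval_aeval_self (l : Fin 2) (R : Polynomial k) :
    nodeEval k l (Polynomial.aeval (nodeVar k l) R) = R := by
  rw [← Polynomial.aeval_algHom_apply, nodeEval_nodeVar_self, Polynomial.aeval_X_left_apply]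

theorem nodeEval_aeval_of_ne {l l' : Fin 2} (h : l' ≠ l) (R : Polynomial k) :
    nodeEval k l (Polynomial.aeval (nodeVar k l') R) = Polynomial.C (R.coeff 0) := by
  rw [← Polynomial.aeval_algHom_apply, nodeEval_nodeVar_of_ne h,
    ← Polynomial.coeff_zero_eq_aeval_zero', Polynomial.algebraMap_eq]

theorem NodeRing.exists_eq_aeval_add_aeval (b : NodeRing k) :
    ∃ P Q : Polynomial k, b = Polynomial.aeval (nodeVar k 0) P
      + Polynomial.aeval (nodeVar k 1) (Polynomial.X * Q) := by
  have hxy : nodeVar k 0 * nodeVar k 1 = 0 := nodeVar_mul_nodeVar_of_ne (by decide)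
  obtain ⟨p, rfl⟩ := Ideal.Quotient.mk_surjective b
  induction p using MvPolynomial.induction_on with
  | C c =>
    refine ⟨Polynomial.C c, 0, ?_⟩
    rw [mul_zero, map_zero, add_zero, Polynomial.aeval_C]
    rfl
  | add p q hp hq =>
    obtain ⟨P₁, Q₁, h₁⟩ := hp
    obtain ⟨P₂, Q₂, h₂⟩ := hq
    refine ⟨P₁ + P₂, Q₁ + Q₂, ?_⟩
    rw [map_add, h₁, h₂, map_add, mul_add, map_add]
    ring
  | mul_X p l hp =>
    obtain ⟨P, Q, h⟩ := hp
    rw [map_mul, h]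
    change ∃ P' Q' : Polynomial k, _ * nodeVar k l = _
    obtain rfl | rfl : l = 0 ∨ l = 1 := by fin_cases l <;> simp
    · refine ⟨P * Polynomial.X, 0, ?_⟩
      simp only [map_mul, Polynomial.aeval_X, mul_zero, map_zero, add_zero]
      linear_combination Polynomial.aeval (nodeVar k 1) Q * hxy
    · refine ⟨0, Polynomial.C (P.coeff 0) + Polynomial.X * Q, ?_⟩
      conv_lhs => rw [← Polynomial.X_mul_divX_add P]
      simp only [map_mul, map_add, Polynomial.aeval_X, Polynomial.aeval_C, map_zero]
      linear_combination Polynomial.aeval (nodeVar k 0) P.divX * hxy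

theorem NodeRing.ext_nodeEval {b c : NodeRing k} (h : ∀ l, nodeEval k l b = nodeEval k l c) :
    b = c := by
  rw [← sub_eq_zero]
  obtain ⟨P, Q, hd⟩ := NodeRing.exists_eq_aeval_add_aeval (b - c)
  have h0 : nodeEval k 0 (b - c) = 0 := by rw [map_sub, h, sub_self]
  have h1 : nodeEval k 1 (b - c) = 0 := by rw [map_sub, h, sub_self]
  rw [hd, map_add, nodeEval_aeval_self, nodeEval_aeval_of_ne (by decide),
    Polynomial.coeff_X_mul_zero, map_zero, add_zero] at h0
  rw [hd, map_add, nodeEval_aeval_self, nodeEval_aeval_of_ne (by decide), h0,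
    Polynomial.coeff_zero, map_zero, zero_add, mul_eq_zero] at h1
  rw [hd, h0, h1.resolve_left Polynomial.X_ne_zero]
  simp

theorem NodeRing.linearMap_ext {M : Type*} [AddCommGroup M] [Module k M]
    {f g : NodeRing k →ₗ[k] M} (h : ∀ l m, f (nodeVar k l ^ m) = g (nodeVar k l ^ m)) :
    f = g := by
  have haeval (l : Fin 2) (R : Polynomial k) :
      f (Polynomial.aeval (nodeVar k l) R) = g (Polynomial.aeval (nodeVar k l) R) := by
    simp only [Polynomial.aeval_eq_sum_range, map_sum, map_smul, h]
  refine LinearMap.ext fun b => ?_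
  obtain ⟨P, Q, rfl⟩ := NodeRing.exists_eq_aeval_add_aeval b
  rw [map_add, map_add, haeval, haeval]

theorem mul_nodeVar_pow (b : NodeRing k) (l : Fin 2) {r : ℕ} (hr : r ≠ 0) :
    b * nodeVar k l ^ r
      = Polynomial.aeval (nodeVar k l) (nodeEval k l b * Polynomial.X ^ r) := by
  refine NodeRing.ext_nodeEval fun l' => ?_
  by_cases hl : l' = l
  · subst hl
    simp
  · rw [map_mul, map_pow, nodeEval_nodeVar_of_ne (Ne.symm hl), zero_pow hr, mul_zero,
      nodeEval_aeval_of_ne (Ne.symm hl), Polynomial.coeff_mul_X_pow', if_neg (by omega), map_zero]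

theorem coeff_zero_nodeEval (l l' : Fin 2) (b : NodeRing k) :
    (nodeEval k l b).coeff 0 = (nodeEval k l' b).coeff 0 := by
  have horigin (l m : Fin 2) : Polynomial.aeval (0 : k) (nodeEval k l (nodeVar k m)) = 0 := by
    by_cases h : m = l
    · subst h
      simp
    · simp [h]
  have h : (Polynomial.aeval (0 : k)).comp (nodeEval k l)
      = (Polynomial.aeval (0 : k)).comp (nodeEval k l') :=
    NodeRing.algHom_ext fun m => by simp only [AlgHom.comp_apply, horigin]
  simpa only [Polynomial.coeff_zero_eq_aeval_zero, AlgHom.comp_apply] using congr($h b)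

theorem eq_aeval_of_nodeEval_eq_zero {l l' : Fin 2} (hll' : l ≠ l') {b : NodeRing k}
    (h : nodeEval k l' b = 0) : b = Polynomial.aeval (nodeVar k l) (nodeEval k l b) := by
  refine NodeRing.ext_nodeEval fun l'' => ?_
  by_cases hl : l'' = l
  · subst hl
    simp
  · obtain rfl : l'' = l' := by omega
    rw [h, nodeEval_aeval_of_ne hll', coeff_zero_nodeEval l l'', h, Polynomial.coeff_zero,
      map_zero]

end Node

theorem Polynomial.coeff_expand_contract {R : Type*} [CommSemiring R] {p : ℕ} (hp : 0 < p)
    (f : Polynomial R) (n : ℕ) :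
    (expand R p (contract p f)).coeff n = if p ∣ n then f.coeff n else 0 := by
  rw [coeff_expand hp]
  split_ifs with h
  · rw [coeff_contract hp.ne', Nat.div_mul_cancel h]
  · rfl

section DiagonalAction

variable {k : Type} [Field k] {a : ℕ} {w : Fin 2 → k} {σ : NodeRing k ≃ₐ[k] NodeRing k}

theorem map_nodeVar_pow (hσ : ∀ l, σ (nodeVar k l) = w l • nodeVar k l) (l : Fin 2)
    (m : ℕ) : σ (nodeVar k l ^ m) = w l ^ m • nodeVar k l ^ m := by
  rw [map_pow, hσ, smul_pow]

structure IsPrimitiveDiagonalAction (σ : NodeRing k ≃ₐ[k] NodeRing k) (a : ℕ)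
    (w : Fin 2 → k) : Prop where
  pos : 0 < a
  isPrimitiveRoot : ∀ l, IsPrimitiveRoot (w l) a
  map_nodeVar : ∀ l, σ (nodeVar k l) = w l • nodeVar k l

namespace IsPrimitiveDiagonalAction

theorem map_nodeVar_pow_of_dvd (hσ : IsPrimitiveDiagonalAction σ a w) (l : Fin 2) {m : ℕ}
    (hm : a ∣ m) : σ (nodeVar k l ^ m) = nodeVar k l ^ m := by
  obtain ⟨q, rfl⟩ := hm
  rw [map_nodeVar_pow hσ.map_nodeVar, pow_mul, (hσ.isPrimitiveRoot l).pow_eq_one, one_pow,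
    one_smul]

theorem pow_eq_one (hσ : IsPrimitiveDiagonalAction σ a w) : σ ^ a = 1 :=
  AlgEquiv.coe_toAlgHom_injective <| NodeRing.algHom_ext fun l => by
    change (σ ^ a) (nodeVar k l) = nodeVar k l
    rw [AlgEquiv.pow_apply_of_apply_eq_smul (hσ.map_nodeVar l),
      (hσ.isPrimitiveRoot l).pow_eq_one, one_smul]

theorem natCast_ne_zero (hσ : IsPrimitiveDiagonalAction σ a w) : (a : k) ≠ 0 :=
  have : NeZero a := ⟨hσ.pos.ne'⟩
  (hσ.isPrimitiveRoot 0).neZero'.out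

theorem orbitAverage_nodeVar_pow (hσ : IsPrimitiveDiagonalAction σ a w) (l : Fin 2) (m : ℕ) :
    orbitAverage σ a (nodeVar k l ^ m) = if a ∣ m then nodeVar k l ^ m else 0 := by
  have hw := hσ.isPrimitiveRoot l
  split_ifs with hm
  · exact orbitAverage_eq_self_of_fixed hσ.natCast_ne_zero (hσ.map_nodeVar_pow_of_dvd l hm)
  · refine orbitAverage_eq_zero_of_apply_eq_smul ?_ ?_ (map_nodeVar_pow hσ.map_nodeVar l m)
    · rw [← pow_mul, mul_comm, pow_mul, hw.pow_eq_one, one_pow]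
    · rwa [Ne, hw.pow_eq_one_iff_dvd]

theorem orbitAverage_aeval_nodeVar (hσ : IsPrimitiveDiagonalAction σ a w) (l : Fin 2)
    (R : Polynomial k) :
    orbitAverage σ a (Polynomial.aeval (nodeVar k l) R)
      = Polynomial.aeval (nodeVar k l) (Polynomial.expand k a (Polynomial.contract a R)) := by
  induction R using Polynomial.induction_on' with
  | add P Q hP hQ =>
    rw [map_add, map_add, hP, hQ, Polynomial.contract_add hσ.pos.ne', map_add, map_add]
  | monomial n c =>
    have hproj : Polynomial.expand k a (Polynomial.contract a (Polynomial.monomial n c))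
        = if a ∣ n then Polynomial.monomial n c else 0 := by
      ext t
      rw [Polynomial.coeff_expand_contract hσ.pos, apply_ite (Polynomial.coeff · t),
        Polynomial.coeff_monomial, Polynomial.coeff_zero]
      rcases eq_or_ne n t with rfl | hnt <;> simp [*]
    rw [hproj, Polynomial.aeval_monomial, ← Algebra.smul_def, map_smul,
      hσ.orbitAverage_nodeVar_pow]
    split_ifs
    · rw [Polynomial.aeval_monomial, ← Algebra.smul_def]
    · rw [map_zero, smul_zero]

theorem eq_zero_of_forall_orbitAverage_mul_eq_zero (hσ : IsPrimitiveDiagonalAction σ a w)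
    {d : NodeRing k} (hd : ∀ c, orbitAverage σ a (d * c) = 0) : d = 0 := by
  refine NodeRing.ext_nodeEval fun l => Polynomial.ext fun t => ?_
  have ha := hσ.pos
  obtain ⟨r, hr, hdvd⟩ : ∃ r, r ≠ 0 ∧ a ∣ t + r := by
    have := Nat.mod_lt t ha
    refine ⟨a - t % a, by omega, t / a + 1, ?_⟩
    have := Nat.div_add_mod t a
    rw [Nat.mul_succ]
    omega
  have h := congr(nodeEval k l $(hd (nodeVar k l ^ r)))
  rw [mul_nodeVar_pow d l hr, hσ.orbitAverage_aeval_nodeVar, nodeEval_aeval_self, map_zero] at h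
  have := congr(Polynomial.coeff $h (t + r))
  rwa [Polynomial.coeff_expand_contract ha, if_pos hdvd, Polynomial.coeff_mul_X_pow,
    Polynomial.coeff_zero] at this

theorem exists_eq_nodeVar_pow_mul_of_fixed (hσ : IsPrimitiveDiagonalAction σ a w)
    {l l' : Fin 2} (hll' : l ≠ l') {s : NodeRing k} (hs : σ s = s)
    (h : s * nodeVar k l' ^ a = 0) : ∃ t, σ t = t ∧ s = nodeVar k l ^ a * t := by
  have ha := hσ.pos
  have hs' : nodeEval k l' s = 0 := by
    have := congr(nodeEval k l' $h)
    rw [mul_nodeVar_pow s l' ha.ne', nodeEval_aeval_self, map_zero, mul_eq_zero] at this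
    exact this.resolve_right (pow_ne_zero a Polynomial.X_ne_zero)
  set R := nodeEval k l s
  have hsR : s = Polynomial.aeval (nodeVar k l) R := eq_aeval_of_nodeEval_eq_zero hll' hs'
  have hR : Polynomial.expand k a (Polynomial.contract a R) = R := by
    have := congr(nodeEval k l $(orbitAverage_eq_self_of_fixed hσ.natCast_ne_zero hs))
    rwa [hsR, hσ.orbitAverage_aeval_nodeVar, nodeEval_aeval_self, ← hsR] at this
  set Q := Polynomial.contract a R
  have hQ : Q.coeff 0 = 0 := by
    rw [Polynomial.coeff_contract ha.ne', zero_mul, coeff_zero_nodeEval l l' s, hs',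
      Polynomial.coeff_zero]
  refine ⟨Polynomial.aeval (nodeVar k l ^ a) Q.divX, ?_, ?_⟩
  · rw [← Polynomial.aeval_algHom_apply, hσ.map_nodeVar_pow_of_dvd l dvd_rfl]
  · conv_lhs => rw [hsR, ← hR, Polynomial.expand_aeval, ← Polynomial.X_mul_divX_add Q, hQ]
    simp

theorem orbitAverage_nodeVar_pow_sub_mul_pow (hσ : IsPrimitiveDiagonalAction σ a w)
    (l' l : Fin 2) {r m : ℕ} (hr : r ≠ 0) (hra : r < a) (hm : m < a) :
    orbitAverage σ a (nodeVar k l' ^ (a - r) * nodeVar k l ^ m)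
      = if l' = l ∧ r = m then nodeVar k l ^ a else 0 := by
  by_cases hl : l' = l
  · subst hl
    rw [← pow_add, hσ.orbitAverage_nodeVar_pow]
    by_cases hrm : r = m
    · subst hrm
      simp [Nat.sub_add_cancel hra.le]
    · have hndvd : ¬a ∣ a - r + m := fun hdvd => hrm <| by
        have := Nat.eq_of_dvd_of_lt_two_mul (by omega) hdvd (by omega)
        omega
      simp [hndvd, hrm]
  · rw [if_neg (fun h => hl h.1)]
    rcases eq_or_ne m 0 with rfl | hm0
    · rw [pow_zero, mul_one, hσ.orbitAverage_nodeVar_pow,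
        if_neg (Nat.not_dvd_of_pos_of_lt (by omega) (by omega))]
    · rw [nodeVar_pow_mul_pow_of_ne hl (by omega) hm0, map_zero]

theorem linearMap_ext_of_lt (hσ : IsPrimitiveDiagonalAction σ a w)
    {f g : NodeRing k →ₗ[k] NodeRing k} (hf : ∀ s c, σ s = s → f (s * c) = s * f c)
    (hg : ∀ s c, σ s = s → g (s * c) = s * g c)
    (h : ∀ l m, m < a → f (nodeVar k l ^ m) = g (nodeVar k l ^ m)) : f = g := by
  refine NodeRing.linearMap_ext fun l m => ?_
  have hfixed := hσ.map_nodeVar_pow_of_dvd l (Nat.dvd_mul_right a (m / a))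
  rw [← Nat.div_add_mod m a, pow_add, hf _ _ hfixed, hg _ _ hfixed,
    h l _ (Nat.mod_lt _ hσ.pos)]

theorem exists_map_nodeVar_pow_eq_mul (hσ : IsPrimitiveDiagonalAction σ a w)
    {f : NodeRing k → NodeRing k} (hf : ∀ s c, σ s = s → f (s * c) = s * f c) (hf0 : f 0 = 0)
    (hfix : ∀ c, σ (f c) = f c) (l : Fin 2) {r : ℕ} (hr : r ≠ 0) :
    ∃ t, σ t = t ∧ f (nodeVar k l ^ r) = nodeVar k l ^ a * t := by
  obtain ⟨l', hl'⟩ := exists_ne l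
  refine hσ.exists_eq_nodeVar_pow_mul_of_fixed hl'.symm (hfix _) ?_
  rw [mul_comm, ← hf _ _ (hσ.map_nodeVar_pow_of_dvd l' dvd_rfl),
    nodeVar_pow_mul_pow_of_ne hl' hσ.pos.ne' hr, hf0]

theorem exists_orbitAverage_mul_eq (hσ : IsPrimitiveDiagonalAction σ a w)
    (f : NodeRing k →ₗ[k] NodeRing k) (hf : ∀ s c, σ s = s → f (s * c) = s * f c)
    (hfix : ∀ c, σ (f c) = f c) : ∃ b, ∀ c, orbitAverage σ a (b * c) = f c := by
  have hquot (l : Fin 2) (r : ℕ) :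
      ∃ t, σ t = t ∧ (r ≠ 0 → f (nodeVar k l ^ r) = nodeVar k l ^ a * t) := by
    rcases eq_or_ne r 0 with rfl | hr
    · exact ⟨0, map_zero σ, absurd rfl⟩
    · obtain ⟨t, ht, hft⟩ := hσ.exists_map_nodeVar_pow_eq_mul hf f.map_zero hfix l hr
      exact ⟨t, ht, fun _ => hft⟩
  choose t ht_fix ht using hquot
  set b := f 1 + ∑ l, ∑ r ∈ Finset.Ico 1 a, nodeVar k l ^ (a - r) * t l r
  have hmul (s c : NodeRing k) (hs : σ s = s) :
      orbitAverage σ a (b * (s * c)) = s * orbitAverage σ a (b * c) := by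
    rw [mul_left_comm, orbitAverage_mul_of_fixed hs]
  suffices hsmall :
      ∀ l m, m < a → orbitAverage σ a (b * nodeVar k l ^ m) = f (nodeVar k l ^ m) from
    ⟨b, LinearMap.congr_fun (hσ.linearMap_ext_of_lt
      (f := (orbitAverage σ a).comp (LinearMap.mulLeft k b)) hmul hf hsmall)⟩
  intro l m hm
  have hterm (l' : Fin 2) (r : ℕ) (hr : r ∈ Finset.Ico 1 a) :
      orbitAverage σ a (nodeVar k l' ^ (a - r) * t l' r * nodeVar k l ^ m)
        = if l' = l then (if r = m then f (nodeVar k l ^ m) else 0) else 0 := by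
    obtain ⟨hr1, hra⟩ := Finset.mem_Ico.mp hr
    rw [mul_right_comm, mul_comm _ (t l' r), orbitAverage_mul_of_fixed (ht_fix l' r),
      hσ.orbitAverage_nodeVar_pow_sub_mul_pow l' l (by omega) hra hm, ← ite_and]
    split_ifs with h
    · obtain ⟨rfl, rfl⟩ := h
      rw [ht l' r (by omega), mul_comm]
    · rw [mul_zero]
  simp only [b, add_mul, map_add, Finset.sum_mul, map_sum, orbitAverage_mul_of_fixed (hfix 1)]
  rw [Finset.sum_congr rfl fun l' _ => Finset.sum_congr rfl (hterm l')]
  simp only [Finset.sum_ite_irrel, Finset.sum_const_zero, Finset.sum_ite_eq',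
    Finset.mem_univ, if_true, hσ.orbitAverage_nodeVar_pow]
  rcases eq_or_ne m 0 with rfl | hm0
  · simp
  · simp [Nat.not_dvd_of_pos_of_lt (Nat.pos_of_ne_zero hm0) hm, Nat.one_le_iff_ne_zero.mpr hm0,
      hm]

end IsPrimitiveDiagonalAction

end DiagonalAction

/-- Let `k` be a field, `a` a positive integer, `ζ ∈ k` a primitive `a`-th root
of unity, `B = k[x,y]/(xy)`, `i, j` coprime to `a`, and `σ` the (unique) `k`-algebra automorphism
of `B` with `σ x = ζ^i • x`, `σ y = ζ^j • y`.  Let `A = B^⟨σ⟩` be the invariant subalgebra and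
`E b = a⁻¹ ∑_{n<a} σⁿ b` the averaging projection onto `A`.  Then `Θ : B → Hom_A(B, A)`,
`Θ b c = E (b * c)`, is an isomorphism of `B`-modules (where `Hom_A(B,A)` has the `B`-module
structure `(b • f) c = f (b * c)`), and `Θ` is `σ`-equivariant: `Θ (σ b) c = Θ b (σ⁻¹ c)`.
`A`-linear maps `B → A` are encoded as additive maps `f : B → B` with `σ`-invariant values
satisfying `f (s * c) = s * f c` for all `σ`-invariant `s`. -/
theorem stmt4 (k : Type) [Field k] (a : ℕ) (ha : 0 < a) (ζ : k) (hζ : IsPrimitiveRoot ζ a)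
    (i j : ℕ) (hi : Nat.Coprime i a) (hj : Nat.Coprime j a)
    (σ : NodeRing k ≃ₐ[k] NodeRing k)
    (hσx : σ (nodeX k) = ζ ^ i • nodeX k) (hσy : σ (nodeY k) = ζ ^ j • nodeY k)
    (E : NodeRing k → NodeRing k)
    (hE : ∀ b, E b = (a : k)⁻¹ • ∑ n ∈ Finset.range a, (σ ^ n) b)
    (Θ : NodeRing k → NodeRing k → NodeRing k)
    (hΘ : ∀ b c, Θ b c = E (b * c)) :
    -- `E` takes values in the invariant subalgebra `A`
    (∀ b, σ (E b) = E b) ∧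
    -- each `Θ b` is an `A`-linear map `B → A`
    (∀ b c₁ c₂, Θ b (c₁ + c₂) = Θ b c₁ + Θ b c₂) ∧
    (∀ b s c, σ s = s → Θ b (s * c) = s * Θ b c) ∧
    -- `Θ` is a morphism for the `B`-module structure `(b • f) c = f (b * c)` on `Hom_A(B, A)`
    (∀ b b' c, Θ (b' * b) c = Θ b (b' * c)) ∧
    -- `Θ` is bijective onto `Hom_A(B, A)`
    (∀ f : NodeRing k → NodeRing k,
        (∀ c₁ c₂, f (c₁ + c₂) = f c₁ + f c₂) →
        (∀ s c, σ s = s → f (s * c) = s * f c) →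
        (∀ c, σ (f c) = f c) →
        ∃! b : NodeRing k, ∀ c, f c = Θ b c) ∧
    -- `σ`-equivariance
    (∀ b c, Θ (σ b) c = Θ b (σ.symm c)) := by
  have hw : ∀ l, IsPrimitiveRoot (![ζ ^ i, ζ ^ j] l) a :=
    Fin.forall_fin_two.mpr ⟨hζ.pow_of_coprime i hi, hζ.pow_of_coprime j hj⟩
  have hσ : IsPrimitiveDiagonalAction σ a ![ζ ^ i, ζ ^ j] :=
    ⟨ha, hw, Fin.forall_fin_two.mpr ⟨hσx, hσy⟩⟩
  obtain rfl : E = orbitAverage σ a := funext fun b => (hE b).trans (orbitAverage_apply b).symm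
  obtain rfl : Θ = fun b c => orbitAverage σ a (b * c) := funext₂ hΘ
  refine ⟨fun b => (map_orbitAverage b).trans (orbitAverage_map hσ.pow_eq_one b),
    fun b c₁ c₂ => by simp only [mul_add, map_add], fun b s c hs => ?_,
    fun b b' c => by simp only [mul_comm b' b, mul_assoc], fun f hadd hA hfix => ?_,
    fun b c => ?_⟩
  · simp only [mul_left_comm b s, orbitAverage_mul_of_fixed hs]
  · let fₗ : NodeRing k →ₗ[k] NodeRing k :=
      { toFun := f
        map_add' := hadd
        map_smul' := fun γ c => by
          have h := hA _ c (σ.commutes γ)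
          rwa [← Algebra.smul_def, ← Algebra.smul_def] at h }
    obtain ⟨b, hb⟩ := hσ.exists_orbitAverage_mul_eq fₗ hA hfix
    refine ⟨b, fun c => (hb c).symm, fun b' hb' => ?_⟩
    rw [← sub_eq_zero]
    refine hσ.eq_zero_of_forall_orbitAverage_mul_eq_zero fun c => ?_
    rw [sub_mul, map_sub, sub_eq_zero]
    exact (hb' c).symm.trans (hb c).symm
  · simp only [← orbitAverage_map hσ.pow_eq_one (b * σ.symm c), map_mul,
      AlgEquiv.apply_symm_apply]
end

section
/- Let k be a field and α, β ≥ 1 integers. Let A = k[u,v]/(uv), B = k[x,y]/(xy), and φ : A → B the k-algebra homomorphism with φ(u) = x^α and φ(v) = y^β. Let P : B → A be the A-linear projection onto the summand A·1 of the decomposition B = A·1 ⊕ ⊕_{l=1}^{α−1} A·x^l ⊕ ⊕_{m=1}^{β−1} A·y^m; explicitly, P(x^n) = u^{n/α} if α divides n and P(x^n) = 0 otherwise, P(y^n) = v^{n/β} if β divides n and P(y^n) = 0 otherwise. Then the map Θ : B → Hom_A(B, A) defined by Θ(b)(c) = P(bc) is an isomorphism of B-modules; in particular Hom_A(B, A)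 is a free B-module of rank one, generated by P. -/
/-!
Over `A`, the node `B` is spanned by `1, x, …, x^(α-1), y, …, y^(β-1)`, and `v` kills every
`x^l`, `u` every `y^m` (`l, m ≥ 1`). For `b = ∑ aₗ xˡ + ∑ cₘ yᵐ` the functional `c ↦ P (b c)`
takes the values `a₀ + c₀`, `a_(α-j) u` and `c_(β-j) v` on `1`, `x^j` and `y^j`, because
`P (x^n)` for `0 < n < 2α` only sees `n = α`. Since the annihilator of `u` in `A` is `vA`,
`a u = 0` forces `a xˡ = 0`, which gives injectivity; conversely `f (x^j)` is killed by `v`,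
hence lies in `uA`, so these values can be prescribed, which gives surjectivity.
-/

open MvPolynomial

set_option synthInstance.maxHeartbeats 1000000
set_option maxHeartbeats 1000000

/-- A second copy `A = k[u,v]/(uv)` of the affine node (with variables indexed by `Bool`). -/
abbrev NodeRing' (k : Type) [Field k] : Type :=
  MvPolynomial Bool k ⧸ (Ideal.span {(X false * X true : MvPolynomial Bool k)})

/-- The class of `u` in `k[u,v]/(uv)`. -/
noncomputable def nodeU (k : Type) [Field k] : NodeRing' k :=
  Ideal.Quotient.mk _ (X false)

/-- The class of `v` in `k[u,v]/(uv)`. -/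
noncomputable def nodeV (k : Type) [Field k] : NodeRing' k :=
  Ideal.Quotient.mk _ (X true)

theorem Submodule.span_eq_top_of_mul_mem {k S R : Type*} [CommSemiring k] [CommSemiring S]
    [Semiring R] [Algebra k S] [Algebra k R] [Algebra S R] [IsScalarTower k S R]
    {s G : Set R} (hs : Algebra.adjoin k s = ⊤) (h1 : 1 ∈ span S G)
    (hmul : ∀ g ∈ G, ∀ t ∈ s, g * t ∈ span S G) : span S G = ⊤ := by
  have hmulR : ∀ t ∈ Algebra.adjoin k s, ∀ m ∈ span S G, m * t ∈ span S G := by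
    intro t ht
    induction ht using Algebra.adjoin_induction with
    | mem t ht =>
      intro m hm
      induction hm using Submodule.span_induction with
      | mem g hg => exact hmul g hg t ht
      | zero => simp
      | add m m' _ _ hm hm' => rw [add_mul]; exact add_mem hm hm'
      | smul r m _ hm => rw [smul_mul_assoc]; exact Submodule.smul_mem _ r hm
    | algebraMap r =>
      intro m hm
      rw [← Algebra.commutes, ← Algebra.smul_def]
      exact Submodule.smul_of_tower_mem _ r hm
    | add t t' _ _ ht ht' => intro m hm; rw [mul_add]; exact add_mem (ht m hm) (ht' m hm)
    | mul t t' _ _ ht ht' => intro m hm; rw [← mul_assoc]; exact ht' _ (ht m hm)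
  refine eq_top_iff.mpr fun t _ => ?_
  simpa using hmulR t (hs ▸ Algebra.mem_top) 1 h1

theorem Ideal.Quotient.exists_eq_mk_mul_of_mk_mul_eq_zero {R : Type*} [CommRing R] [IsDomain R]
    {p q r : R} (hp : p ≠ 0) (hr : r = p * q) {a : R ⧸ Ideal.span {r}}
    (ha : Ideal.Quotient.mk _ p * a = 0) : ∃ g, a = Ideal.Quotient.mk _ q * g := by
  obtain ⟨F, rfl⟩ := Ideal.Quotient.mk_surjective a
  rw [← map_mul, Ideal.Quotient.eq_zero_iff_mem, Ideal.mem_span_singleton, hr] at ha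
  obtain ⟨G, hG⟩ := ha
  refine ⟨Ideal.Quotient.mk _ G, ?_⟩
  rw [← map_mul, mul_left_cancel₀ hp (hG.trans (mul_assoc p q G))]

theorem pow_mul_pow_eq_zero_of_mul_eq_zero {R : Type*} [CommSemiring R] {s t : R}
    (h : s * t = 0) {i j : ℕ} (hi : i ≠ 0) (hj : j ≠ 0) : s ^ i * t ^ j = 0 := by
  obtain ⟨i, rfl⟩ := Nat.exists_eq_succ_of_ne_zero hi
  obtain ⟨j, rfl⟩ := Nat.exists_eq_succ_of_ne_zero hj
  rw [pow_succ, pow_succ, mul_mul_mul_comm, h, mul_zero]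

section PowComb

variable {A B : Type*} [CommRing A] [CommRing B] [Algebra A B] {α β : ℕ}

def powComb (s t : B) (a : Fin α → A) (c : Fin β → A) : B :=
  ∑ i, a i • s ^ (i : ℕ) + ∑ i, c i • t ^ (i : ℕ)

theorem powComb_comm (s t : B) (a : Fin α → A) (c : Fin β → A) :
    powComb s t a c = powComb t s c a :=
  add_comm _ _

variable (P : B →ₗ[A] A) {s t : B} {p q : A}

theorem apply_pow_of_lt (hPs : ∀ n, P (s ^ n) = if α ∣ n then p ^ (n / α) else 0) {n : ℕ}
    (hn : n < α) : P (s ^ n) = if n = 0 then 1 else 0 := by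
  rw [hPs]
  by_cases h0 : n = 0
  · simp [h0]
  · rw [if_neg fun h => h0 (Nat.eq_zero_of_dvd_of_lt h hn), if_neg h0]

theorem apply_powComb (hα : 0 < α) (hβ : 0 < β)
    (hPs : ∀ n, P (s ^ n) = if α ∣ n then p ^ (n / α) else 0)
    (hPt : ∀ n, P (t ^ n) = if β ∣ n then q ^ (n / β) else 0) (a : Fin α → A) (c : Fin β → A) :
    P (powComb s t a c) = a ⟨0, hα⟩ + c ⟨0, hβ⟩ := by
  have h0 : ∀ {n : ℕ} (hn : 0 < n) (x : Fin n), (x : ℕ) = 0 ↔ x = ⟨0, hn⟩ := by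
    simp [Fin.ext_iff]
  simp only [powComb, map_add, map_sum, map_smul, apply_pow_of_lt P hPs (Fin.is_lt _),
    apply_pow_of_lt P hPt (Fin.is_lt _), smul_eq_mul, mul_ite, mul_one, mul_zero, h0 hα, h0 hβ,
    Finset.sum_ite_eq', Finset.mem_univ, if_true]

theorem apply_powComb_mul_pow (hst : s * t = 0)
    (hPs : ∀ n, P (s ^ n) = if α ∣ n then p ^ (n / α) else 0) (a : Fin α → A) (c : Fin β → A)
    {j : ℕ} (hj : 0 < j) (hjα : j < α) :
    P (powComb s t a c * s ^ j) = a ⟨α - j, by omega⟩ * p := by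
  have hPt : ∀ i : Fin β, P (t ^ (i : ℕ) * s ^ j) = 0 := by
    intro i
    rcases Nat.eq_zero_or_pos i with hi | hi
    · rw [hi, pow_zero, one_mul, apply_pow_of_lt P hPs hjα, if_neg hj.ne']
    · rw [mul_comm, pow_mul_pow_eq_zero_of_mul_eq_zero hst hj.ne' hi.ne', map_zero]
  have hPs' : ∀ i : Fin α, P (s ^ ((i : ℕ) + j)) = if i = ⟨α - j, by omega⟩ then p else 0 := by
    intro i
    have hdvd : α ∣ (i : ℕ) + j ↔ (i : ℕ) = α - j :=
      ⟨fun h => by have := Nat.eq_of_dvd_of_lt_two_mul (by omega) h (by omega); omega,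
        fun h => ⟨1, by omega⟩⟩
    rw [hPs]
    by_cases h : i = ⟨α - j, by omega⟩
    · have hi : (i : ℕ) = α - j := congrArg Fin.val h
      rw [if_pos (hdvd.mpr hi), if_pos h, hi, Nat.sub_add_cancel hjα.le, Nat.div_self (by omega),
        pow_one]
    · rw [if_neg fun hd => h (Fin.ext (hdvd.mp hd)), if_neg h]
  simp only [powComb, add_mul, Finset.sum_mul, smul_mul_assoc, ← pow_add, map_add, map_sum,
    map_smul, hPt, hPs', smul_eq_mul, mul_ite, mul_zero, Finset.sum_const_zero, add_zero,
    Finset.sum_ite_eq', Finset.mem_univ, if_true]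

end PowComb

section Node

variable (k : Type) [Field k]

theorem nodeX_mul_nodeY : nodeX k * nodeY k = 0 := by
  rw [nodeX, nodeY, ← map_mul, Ideal.Quotient.eq_zero_iff_mem]
  exact Ideal.subset_span rfl

theorem nodeY_mul_nodeX : nodeY k * nodeX k = 0 := by
  rw [mul_comm, nodeX_mul_nodeY]

theorem adjoin_nodeX_nodeY : Algebra.adjoin k {nodeX k, nodeY k} = ⊤ := by
  have hrange : {nodeX k, nodeY k} = Ideal.Quotient.mkₐ k _ '' Set.range X := by
    ext; simp [Fin.exists_fin_two, nodeX, nodeY, eq_comm]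
  rw [hrange, Algebra.adjoin_image, adjoin_range_X, Algebra.map_top, AlgHom.range_eq_top]
  exact Ideal.Quotient.mkₐ_surjective k _

variable {k}

theorem exists_eq_nodeV_mul_of_nodeU_mul_eq_zero {a : NodeRing' k} (ha : nodeU k * a = 0) :
    ∃ g, a = nodeV k * g :=
  Ideal.Quotient.exists_eq_mk_mul_of_mk_mul_eq_zero (X_ne_zero _) rfl ha

theorem exists_eq_nodeU_mul_of_nodeV_mul_eq_zero {a : NodeRing' k} (ha : nodeV k * a = 0) :
    ∃ g, a = nodeU k * g :=
  Ideal.Quotient.exists_eq_mk_mul_of_mk_mul_eq_zero (X_ne_zero _) (mul_comm _ _) ha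

variable {α β : ℕ} [Algebra (NodeRing' k) (NodeRing k)]

theorem algebraMap_nodeV_mul_nodeX_pow (hβ : 0 < β)
    (hv : algebraMap (NodeRing' k) (NodeRing k) (nodeV k) = nodeY k ^ β) {i : ℕ} (hi : i ≠ 0) :
    algebraMap (NodeRing' k) (NodeRing k) (nodeV k) * nodeX k ^ i = 0 := by
  rw [hv, pow_mul_pow_eq_zero_of_mul_eq_zero (nodeY_mul_nodeX k) hβ.ne' hi]

theorem algebraMap_nodeU_mul_nodeY_pow (hα : 0 < α)
    (hu : algebraMap (NodeRing' k) (NodeRing k) (nodeU k) = nodeX k ^ α) {i : ℕ} (hi : i ≠ 0) :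
    algebraMap (NodeRing' k) (NodeRing k) (nodeU k) * nodeY k ^ i = 0 := by
  rw [hu, pow_mul_pow_eq_zero_of_mul_eq_zero (nodeX_mul_nodeY k) hα.ne' hi]

theorem smul_nodeX_pow_eq_zero_of_mul_nodeU_eq_zero (hβ : 0 < β)
    (hv : algebraMap (NodeRing' k) (NodeRing k) (nodeV k) = nodeY k ^ β) {a : NodeRing' k}
    (ha : a * nodeU k = 0) {i : ℕ} (hi : i ≠ 0) : a • nodeX k ^ i = 0 := by
  obtain ⟨g, rfl⟩ := exists_eq_nodeV_mul_of_nodeU_mul_eq_zero ((mul_comm _ _).trans ha)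
  rw [Algebra.smul_def, map_mul, mul_assoc, mul_left_comm,
    algebraMap_nodeV_mul_nodeX_pow hβ hv hi, mul_zero]

theorem smul_nodeY_pow_eq_zero_of_mul_nodeV_eq_zero (hα : 0 < α)
    (hu : algebraMap (NodeRing' k) (NodeRing k) (nodeU k) = nodeX k ^ α) {a : NodeRing' k}
    (ha : a * nodeV k = 0) {i : ℕ} (hi : i ≠ 0) : a • nodeY k ^ i = 0 := by
  obtain ⟨g, rfl⟩ := exists_eq_nodeU_mul_of_nodeV_mul_eq_zero ((mul_comm _ _).trans ha)
  rw [Algebra.smul_def, map_mul, mul_assoc, mul_left_comm,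
    algebraMap_nodeU_mul_nodeY_pow hα hu hi, mul_zero]

theorem exists_apply_nodeX_pow_eq_mul_nodeU (hβ : 0 < β)
    (hv : algebraMap (NodeRing' k) (NodeRing k) (nodeV k) = nodeY k ^ β)
    (f : NodeRing k →ₗ[NodeRing' k] NodeRing' k) {j : ℕ} (hj : j ≠ 0) :
    ∃ g, f (nodeX k ^ j) = g * nodeU k := by
  have hv0 : nodeV k * f (nodeX k ^ j) = 0 := by
    rw [← smul_eq_mul, ← map_smul, Algebra.smul_def, algebraMap_nodeV_mul_nodeX_pow hβ hv hj,
      map_zero]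
  obtain ⟨g, hg⟩ := exists_eq_nodeU_mul_of_nodeV_mul_eq_zero hv0
  exact ⟨g, hg.trans (mul_comm _ _)⟩

theorem exists_apply_nodeY_pow_eq_mul_nodeV (hα : 0 < α)
    (hu : algebraMap (NodeRing' k) (NodeRing k) (nodeU k) = nodeX k ^ α)
    (f : NodeRing k →ₗ[NodeRing' k] NodeRing' k) {j : ℕ} (hj : j ≠ 0) :
    ∃ g, f (nodeY k ^ j) = g * nodeV k := by
  have hu0 : nodeU k * f (nodeY k ^ j) = 0 := by
    rw [← smul_eq_mul, ← map_smul, Algebra.smul_def, algebraMap_nodeU_mul_nodeY_pow hα hu hj,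
      map_zero]
  obtain ⟨g, hg⟩ := exists_eq_nodeV_mul_of_nodeU_mul_eq_zero hu0
  exact ⟨g, hg.trans (mul_comm _ _)⟩

theorem span_range_nodeX_pow_nodeY_pow [IsScalarTower k (NodeRing' k) (NodeRing k)]
    (hα : 0 < α) (hβ : 0 < β)
    (hu : algebraMap (NodeRing' k) (NodeRing k) (nodeU k) = nodeX k ^ α)
    (hv : algebraMap (NodeRing' k) (NodeRing k) (nodeV k) = nodeY k ^ β) :
    Submodule.span (NodeRing' k) (Set.range (Sum.elim (fun i : Fin α => nodeX k ^ (i : ℕ))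
      (fun i : Fin β => nodeY k ^ (i : ℕ)))) = ⊤ := by
  set M := Submodule.span (NodeRing' k) (Set.range (Sum.elim (fun i : Fin α => nodeX k ^ (i : ℕ))
      (fun i : Fin β => nodeY k ^ (i : ℕ))))
  have h1 : 1 ∈ M := Submodule.subset_span ⟨Sum.inl ⟨0, hα⟩, pow_zero _⟩
  have hx : ∀ n ≤ α, nodeX k ^ n ∈ M := by
    intro n hn
    rcases hn.lt_or_eq with hn | rfl
    · exact Submodule.subset_span ⟨Sum.inl ⟨n, hn⟩, rfl⟩
    · rw [← hu, Algebra.algebraMap_eq_smul_one]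
      exact M.smul_mem _ h1
  have hy : ∀ n ≤ β, nodeY k ^ n ∈ M := by
    intro n hn
    rcases hn.lt_or_eq with hn | rfl
    · exact Submodule.subset_span ⟨Sum.inr ⟨n, hn⟩, rfl⟩
    · rw [← hv, Algebra.algebraMap_eq_smul_one]
      exact M.smul_mem _ h1
  have hx1 : nodeX k ∈ M := pow_one (nodeX k) ▸ hx 1 hα
  have hy1 : nodeY k ∈ M := pow_one (nodeY k) ▸ hy 1 hβ
  have hxy : ∀ {i : ℕ}, i ≠ 0 → nodeX k ^ i * nodeY k = 0 := fun hi => by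
    simpa using pow_mul_pow_eq_zero_of_mul_eq_zero (nodeX_mul_nodeY k) hi one_ne_zero
  have hyx : ∀ {i : ℕ}, i ≠ 0 → nodeY k ^ i * nodeX k = 0 := fun hi => by
    simpa using pow_mul_pow_eq_zero_of_mul_eq_zero (nodeY_mul_nodeX k) hi one_ne_zero
  refine Submodule.span_eq_top_of_mul_mem (adjoin_nodeX_nodeY k) h1 ?_
  rintro _ ⟨i | i, rfl⟩ t (rfl | rfl) <;> simp only [Sum.elim_inl, Sum.elim_inr]
  · exact pow_succ (nodeX k) i ▸ hx (i + 1) i.is_lt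
  · rcases Nat.eq_zero_or_pos i with hi | hi
    · rw [hi, pow_zero, one_mul]
      exact hy1
    · rw [hxy hi.ne']
      exact M.zero_mem
  · rcases Nat.eq_zero_or_pos i with hi | hi
    · rw [hi, pow_zero, one_mul]
      exact hx1
    · rw [hyx hi.ne']
      exact M.zero_mem
  · exact pow_succ (nodeY k) i ▸ hy (i + 1) i.is_lt

theorem exists_eq_powComb [IsScalarTower k (NodeRing' k) (NodeRing k)] (hα : 0 < α) (hβ : 0 < β)
    (hu : algebraMap (NodeRing' k) (NodeRing k) (nodeU k) = nodeX k ^ α)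
    (hv : algebraMap (NodeRing' k) (NodeRing k) (nodeV k) = nodeY k ^ β) (b : NodeRing k) :
    ∃ (a : Fin α → NodeRing' k) (c : Fin β → NodeRing' k), b = powComb (nodeX k) (nodeY k) a c := by
  obtain ⟨w, hw⟩ := (Submodule.mem_span_range_iff_exists_fun _).mp
    ((span_range_nodeX_pow_nodeY_pow hα hβ hu hv).ge Submodule.mem_top (x := b))
  exact ⟨w ∘ Sum.inl, w ∘ Sum.inr, by simpa [powComb, Fintype.sum_sum_type] using hw.symm⟩

theorem eq_zero_of_forall_apply_mul_eq_zero [IsScalarTower k (NodeRing' k) (NodeRing k)]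
    (hα : 0 < α) (hβ : 0 < β)
    (hu : algebraMap (NodeRing' k) (NodeRing k) (nodeU k) = nodeX k ^ α)
    (hv : algebraMap (NodeRing' k) (NodeRing k) (nodeV k) = nodeY k ^ β)
    (P : NodeRing k →ₗ[NodeRing' k] NodeRing' k)
    (hPx : ∀ n : ℕ, P (nodeX k ^ n) = if α ∣ n then nodeU k ^ (n / α) else 0)
    (hPy : ∀ n : ℕ, P (nodeY k ^ n) = if β ∣ n then nodeV k ^ (n / β) else 0)
    {b : NodeRing k} (hb : ∀ c, P (b * c) = 0) : b = 0 := by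
  obtain ⟨a, c, rfl⟩ := exists_eq_powComb hα hβ hu hv b
  have hx : ∀ i : Fin α, i ≠ ⟨0, hα⟩ → a i • nodeX k ^ (i : ℕ) = 0 := by
    intro i hi
    have hi : (i : ℕ) ≠ 0 := Fin.val_ne_of_ne hi
    have h := apply_powComb_mul_pow P (nodeX_mul_nodeY k) hPx a c (j := α - i) (by omega)
      (by omega)
    simp only [hb, Nat.sub_sub_self i.is_lt.le] at h
    exact smul_nodeX_pow_eq_zero_of_mul_nodeU_eq_zero hβ hv h.symm hi
  have hy : ∀ i : Fin β, i ≠ ⟨0, hβ⟩ → c i • nodeY k ^ (i : ℕ) = 0 := by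
    intro i hi
    have hi : (i : ℕ) ≠ 0 := Fin.val_ne_of_ne hi
    have h := apply_powComb_mul_pow P (nodeY_mul_nodeX k) hPy c a (j := β - i) (by omega)
      (by omega)
    simp only [← powComb_comm, hb, Nat.sub_sub_self i.is_lt.le] at h
    exact smul_nodeY_pow_eq_zero_of_mul_nodeV_eq_zero hα hu h.symm hi
  have h0 := hb 1
  rw [mul_one, apply_powComb P hα hβ hPx hPy] at h0
  rw [powComb, Finset.sum_eq_single _ (fun i _ => hx i) (by simp),
    Finset.sum_eq_single _ (fun i _ => hy i) (by simp), pow_zero, pow_zero, Algebra.smul_def,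
    Algebra.smul_def, ← add_mul, ← map_add, h0, map_zero, zero_mul]

theorem exists_forall_apply_mul_eq [IsScalarTower k (NodeRing' k) (NodeRing k)]
    (hα : 0 < α) (hβ : 0 < β)
    (hu : algebraMap (NodeRing' k) (NodeRing k) (nodeU k) = nodeX k ^ α)
    (hv : algebraMap (NodeRing' k) (NodeRing k) (nodeV k) = nodeY k ^ β)
    (P : NodeRing k →ₗ[NodeRing' k] NodeRing' k)
    (hPx : ∀ n : ℕ, P (nodeX k ^ n) = if α ∣ n then nodeU k ^ (n / α) else 0)
    (hPy : ∀ n : ℕ, P (nodeY k ^ n) = if β ∣ n then nodeV k ^ (n / β) else 0)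
    (f : NodeRing k →ₗ[NodeRing' k] NodeRing' k) : ∃ b, ∀ c, P (b * c) = f c := by
  have hfx (j : ℕ) : ∃ g, j ≠ 0 → f (nodeX k ^ j) = g * nodeU k :=
    if hj : j = 0 then ⟨0, (absurd hj ·)⟩
    else (exists_apply_nodeX_pow_eq_mul_nodeU hβ hv f hj).imp fun _ h _ => h
  have hfy (j : ℕ) : ∃ g, j ≠ 0 → f (nodeY k ^ j) = g * nodeV k :=
    if hj : j = 0 then ⟨0, (absurd hj ·)⟩
    else (exists_apply_nodeY_pow_eq_mul_nodeV hα hu f hj).imp fun _ h _ => h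
  choose g hg using hfx
  choose h hh using hfy
  let a : Fin α → NodeRing' k := fun i => if (i : ℕ) = 0 then f 1 else g (α - i)
  let c : Fin β → NodeRing' k := fun i => if (i : ℕ) = 0 then 0 else h (β - i)
  set b := powComb (nodeX k) (nodeY k) a c
  suffices hb : P ∘ₗ LinearMap.mulLeft (NodeRing' k) b = f from
    ⟨b, fun c => LinearMap.congr_fun hb c⟩
  refine LinearMap.ext_on_range (span_range_nodeX_pow_nodeY_pow hα hβ hu hv) ?_
  rintro (i | i)
  · show P (b * nodeX k ^ (i : ℕ)) = f (nodeX k ^ (i : ℕ))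
    by_cases hi : (i : ℕ) = 0
    · rw [hi, pow_zero, mul_one, apply_powComb P hα hβ hPx hPy]
      simp [a, c]
    · rw [apply_powComb_mul_pow P (nodeX_mul_nodeY k) hPx a c (Nat.pos_of_ne_zero hi) i.is_lt,
        hg i hi]
      simp only [a, if_neg (show α - i ≠ 0 by omega), Nat.sub_sub_self i.is_lt.le]
  · show P (b * nodeY k ^ (i : ℕ)) = f (nodeY k ^ (i : ℕ))
    by_cases hi : (i : ℕ) = 0
    · rw [hi, pow_zero, mul_one, apply_powComb P hα hβ hPx hPy]
      simp [a, c]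
    · rw [show b = powComb (nodeY k) (nodeX k) c a from powComb_comm _ _ _ _,
        apply_powComb_mul_pow P (nodeY_mul_nodeX k) hPy c a
        (Nat.pos_of_ne_zero hi) i.is_lt, hh i hi]
      simp only [c, if_neg (show β - i ≠ 0 by omega), Nat.sub_sub_self i.is_lt.le]

end Node

/-- Let `k` be a field, `α, β ≥ 1`, `A = k[u,v]/(uv)`, `B = k[x,y]/(xy)` and
`φ : A → B` the `k`-algebra homomorphism with `φ u = x^α`, `φ v = y^β` (encoded by an algebra
structure).  Let `P : B → A` be the `A`-linear projection onto the summand `A·1`, explicitly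
`P (x^n) = u^(n/α)` if `α ∣ n` and `0` otherwise, and `P (y^n) = v^(n/β)` if `β ∣ n` and `0`
otherwise.  Then `Θ : B → Hom_A(B, A)`, `Θ b = (c ↦ P (b * c))`, is an isomorphism of
`B`-modules, where `Hom_A(B, A)` carries the `B`-module structure `(b • f) c = f (b * c)`;
in particular `Hom_A(B, A)` is a free `B`-module of rank one generated by `P = Θ 1`. -/
theorem stmt7 (k : Type) [Field k] (α β : ℕ) (hα : 1 ≤ α) (hβ : 1 ≤ β)
    [Algebra (NodeRing' k) (NodeRing k)] [IsScalarTower k (NodeRing' k) (NodeRing k)]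
    (hu : algebraMap (NodeRing' k) (NodeRing k) (nodeU k) = nodeX k ^ α)
    (hv : algebraMap (NodeRing' k) (NodeRing k) (nodeV k) = nodeY k ^ β)
    (P : NodeRing k →ₗ[NodeRing' k] NodeRing' k)
    (hPx : ∀ n : ℕ, P (nodeX k ^ n) = if α ∣ n then nodeU k ^ (n / α) else 0)
    (hPy : ∀ n : ℕ, P (nodeY k ^ n) = if β ∣ n then nodeV k ^ (n / β) else 0)
    (Θ : NodeRing k → (NodeRing k →ₗ[NodeRing' k] NodeRing' k))
    (hΘ : ∀ b c, Θ b c = P (b * c)) :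
    -- `Θ` is additive
    (∀ b b', Θ (b + b') = Θ b + Θ b') ∧
    -- `Θ` intertwines the `B`-module structure `(b • f) c = f (b * c)` on `Hom_A(B, A)`
    (∀ b b' c, Θ (b' * b) c = Θ b (b' * c)) ∧
    -- `Θ` is bijective
    Function.Bijective Θ ∧
    -- `Hom_A(B, A)` is free of rank one over `B`, generated by `P`
    Θ 1 = P := by
  refine ⟨fun b b' => LinearMap.ext fun c => ?_, fun b b' c => ?_,
    ⟨fun b b' hbb' => ?_, fun f => ?_⟩, LinearMap.ext fun c => ?_⟩
  · simp only [hΘ, LinearMap.add_apply, add_mul, map_add]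
  · rw [hΘ, hΘ, mul_comm b' b, mul_assoc]
  · refine sub_eq_zero.mp (eq_zero_of_forall_apply_mul_eq_zero hα hβ hu hv P hPx hPy fun c => ?_)
    rw [sub_mul, map_sub, ← hΘ, ← hΘ, hbb', sub_self]
  · obtain ⟨b, hb⟩ := exists_forall_apply_mul_eq hα hβ hu hv P hPx hPy f
    exact ⟨b, LinearMap.ext fun c => (hΘ b c).trans (hb c)⟩
  · rw [hΘ, one_mul]
end

section
/- Let k be a field, S = k[u,v,t] the polynomial ring in three variables, and I ⊆ S the ideal generated by uv − t², ut − v², and vt − u². Define N : S³ → S by N(r₁, r₂, r₃) = (v² − ut)r₁ + (u² − tv)r₂ + (t² − uv)r₃ and M : S² → S³ by M(s₁, s₂) = (ts₁ + us₂, vs₁ + ts₂, us₁ + vs₂). Then the image of N equals I, the sequence 0 → S² → S³ → S → S/I → 0 (with maps M, N, and the quotient projection) is exact; in particular M is injective, ker N = im M, and S/I has projective dimension 2 over S. -/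
/-!
Everything rests on `p = t² - uv` being prime in `k[u,v,t]` (over `k[u,v]` it is `X² - uv`, and
`uv` is not a square) and not dividing `v² - ut`. Reducing a relation `N r = 0` modulo `p` then
shows that `p` divides the two minors `t r₀ - u r₁` and `t r₁ - v r₀`, and the quotients are the
preimage under `M`. For the projective dimension: a flat `S/I` forces `I = I²`, impossible for a
proper nonzero ideal of a Noetherian domain; and a splitting `σ` of a free cover of `I` satisfies
`p σ(b) = b σ(p)` for `b = v² - ut`, so `p` divides `σ(p)`, which puts `1` into `I`.
-/

open MvPolynomial

set_option synthInstance.maxHeartbeats 1000000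
set_option maxHeartbeats 1000000

/-- The polynomial ring `S = k[u,v,t]` (`u = X 0`, `v = X 1`, `t = X 2`). -/
abbrev PolyS (k : Type) [Field k] : Type := MvPolynomial (Fin 3) k

/-- The ideal `I = (uv - t², ut - v², vt - u²)` of the triple point. -/
noncomputable def triplePointIdeal (k : Type) [Field k] : Ideal (PolyS k) :=
  Ideal.span {X 0 * X 1 - X 2 ^ 2, X 0 * X 2 - X 1 ^ 2, X 1 * X 2 - X 0 ^ 2}

theorem Polynomial.irreducible_X_sq_sub_C {R : Type*} [CommRing R] [IsDomain R] {a : R}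
    (ha : ¬ IsSquare a) : Irreducible (X ^ 2 - C a) := by
  have hm : (X ^ 2 - C a).Monic := monic_X_pow_sub_C a two_ne_zero
  by_contra hred
  obtain ⟨c₁, c₂, h₀, h₁⟩ :=
    (hm.not_irreducible_iff_exists_add_mul_eq_coeff natDegree_X_pow_sub_C).mp hred
  have hprod : c₁ * c₂ = -a := by simpa using h₀.symm
  have hsum : c₁ + c₂ = 0 := by simpa using h₁.symm
  exact ha ⟨c₁, by linear_combination hprod - c₁ * hsum⟩

namespace MvPolynomial

variable {σ R : Type*} [CommRing R] [IsDomain R]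

theorem not_isSquare_X_mul_X {i j : σ} (hij : i ≠ j) :
    ¬ IsSquare (X i * X j : MvPolynomial σ R) := by
  classical
  rintro ⟨c, hc⟩
  -- Under `X i ↦ 1`, `X j ↦ X` a square would become the polynomial `X` of degree one.
  set q := aeval (Function.update (fun _ => (1 : Polynomial R)) j Polynomial.X) c
  have hq : q * q = Polynomial.X := by
    simpa [q, Function.update_of_ne hij] using
      (congrArg (aeval (Function.update (fun _ => (1 : Polynomial R)) j Polynomial.X)) hc).symm
  have hq₀ : q ≠ 0 := by
    rintro h
    exact Polynomial.X_ne_zero (R := R) (by simpa [h] using hq.symm)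
  have := congrArg Polynomial.natDegree hq
  rw [Polynomial.natDegree_mul hq₀ hq₀, Polynomial.natDegree_X] at this
  omega

theorem irreducible_X_sq_sub_X_mul_X {i j l : σ} (hji : j ≠ i) (hli : l ≠ i) (hjl : j ≠ l) :
    Irreducible (X i ^ 2 - X j * X l : MvPolynomial σ R) := by
  classical
  let e := (renameEquiv R (Equiv.optionSubtypeNe i).symm).trans (optionEquivLeft R {b // b ≠ i})
  have he : e (X i ^ 2 - X j * X l) =
      Polynomial.X ^ 2 - Polynomial.C (X ⟨j, hji⟩ * X ⟨l, hli⟩) := by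
    simp [e, Equiv.optionSubtypeNe_symm_of_ne hji, Equiv.optionSubtypeNe_symm_of_ne hli,
      optionEquivLeft_X_some, optionEquivLeft_X_none]
  rw [← MulEquiv.irreducible_iff e, he]
  exact Polynomial.irreducible_X_sq_sub_C (not_isSquare_X_mul_X (by simpa using hjl))

end MvPolynomial

theorem Ideal.eq_top_of_projective_of_prime_mem {R : Type*} [CommRing R] [IsDomain R]
    {I : Ideal R} [Module.Projective R I] {p b : R} (hp : Prime p) (hpI : p ∈ I) (hbI : b ∈ I)
    (hpb : ¬ p ∣ b) : I = ⊤ := by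
  obtain ⟨s, hs⟩ := Module.projective_def.mp ‹Module.Projective R I›
  set P : I := ⟨p, hpI⟩
  set B : I := ⟨b, hbI⟩
  have hdvd : ∀ y, p ∣ s P y := by
    intro y
    have hPB : p • B = b • P := Subtype.ext (mul_comm p b)
    have hsym : b * s P y = p * s B y := by
      simpa using congr($(congrArg s hPB) y).symm
    exact (hp.dvd_or_dvd ⟨_, hsym⟩).resolve_left hpb
  choose d hd using hdvd
  have hP : p * ∑ y ∈ (s P).support, d y * y = p * 1 := calc
    _ = ∑ y ∈ (s P).support, s P y * y := by
        rw [Finset.mul_sum]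
        exact Finset.sum_congr rfl fun y _ => by rw [hd y, mul_assoc]
    _ = p := by
        simpa [Finsupp.linearCombination_apply, Finsupp.sum] using congrArg Subtype.val (hs P)
    _ = p * 1 := (mul_one p).symm
  rw [Ideal.eq_top_iff_one, ← mul_left_cancel₀ hp.ne_zero hP]
  exact Ideal.sum_mem _ fun y _ => Ideal.mul_mem_left _ _ y.2

section TriplePoint

variable {R : Type*} [CommRing R] (x y z : R)

def triplePointRelation (r : Fin 3 → R) : R :=
  (y ^ 2 - x * z) * r 0 + (x ^ 2 - z * y) * r 1 + (z ^ 2 - x * y) * r 2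

def triplePointSyzygy (s : Fin 2 → R) : Fin 3 → R :=
  ![z * s 0 + x * s 1, y * s 0 + z * s 1, x * s 0 + y * s 1]

variable {x y z}

theorem mem_span_iff_exists_triplePointRelation {f : R} :
    f ∈ Ideal.span {x * y - z ^ 2, x * z - y ^ 2, y * z - x ^ 2} ↔
      ∃ r, triplePointRelation x y z r = f := by
  rw [Ideal.span, Submodule.mem_span_triple]
  constructor
  · rintro ⟨a, b, c, rfl⟩
    exact ⟨![-b, -c, -a], by simp [triplePointRelation]; ring⟩
  · rintro ⟨r, rfl⟩
    exact ⟨-r 2, -r 0, -r 1, by simp [triplePointRelation]; ring⟩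

theorem triplePointRelation_triplePointSyzygy (s : Fin 2 → R) :
    triplePointRelation x y z (triplePointSyzygy x y z s) = 0 := by
  simp [triplePointRelation, triplePointSyzygy]
  ring

variable [IsDomain R]

theorem triplePointSyzygy_injective (hg : z ^ 2 - x * y ≠ 0) :
    Function.Injective (triplePointSyzygy x y z) := by
  intro s s' h
  have h₀ := congrFun h 0
  have h₁ := congrFun h 1
  simp only [triplePointSyzygy, Matrix.cons_val_zero, Matrix.cons_val_one] at h₀ h₁
  have e₀ : (z ^ 2 - x * y) * s 0 = (z ^ 2 - x * y) * s' 0 := by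
    linear_combination z * h₀ - x * h₁
  have e₁ : (z ^ 2 - x * y) * s 1 = (z ^ 2 - x * y) * s' 1 := by
    linear_combination z * h₁ - y * h₀
  ext i
  fin_cases i
  exacts [mul_left_cancel₀ hg e₀, mul_left_cancel₀ hg e₁]

theorem exists_triplePointSyzygy_of_triplePointRelation_eq_zero (hp : Prime (z ^ 2 - x * y))
    (hnd : ¬ z ^ 2 - x * y ∣ y ^ 2 - x * z) {r : Fin 3 → R}
    (hr : triplePointRelation x y z r = 0) : ∃ s, triplePointSyzygy x y z s = r := by
  simp only [triplePointRelation] at hr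
  obtain ⟨s₀, hs₀⟩ : z ^ 2 - x * y ∣ z * r 0 - x * r 1 :=
    (hp.dvd_or_dvd ⟨y * r 1 - z * r 2, by linear_combination z * hr⟩).resolve_left hnd
  obtain ⟨s₁, hs₁⟩ : z ^ 2 - x * y ∣ z * r 1 - y * r 0 :=
    (hp.dvd_or_dvd ⟨y * r 2 - x * r 1, by linear_combination -y * hr⟩).resolve_left hnd
  have e₀ : z * s₀ + x * s₁ = r 0 := mul_left_cancel₀ hp.ne_zero <| by
    linear_combination -z * hs₀ - x * hs₁
  have e₁ : y * s₀ + z * s₁ = r 1 := mul_left_cancel₀ hp.ne_zero <| by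
    linear_combination -y * hs₀ - z * hs₁
  have e₂ : x * s₀ + y * s₁ = r 2 := mul_left_cancel₀ hp.ne_zero <| by
    linear_combination -x * hs₀ - y * hs₁ - hr
  refine ⟨![s₀, s₁], funext fun i => ?_⟩
  fin_cases i
  exacts [e₀, e₁, e₂]

theorem triplePointRelation_eq_zero_iff (hp : Prime (z ^ 2 - x * y))
    (hnd : ¬ z ^ 2 - x * y ∣ y ^ 2 - x * z) (r : Fin 3 → R) :
    triplePointRelation x y z r = 0 ↔ ∃ s, triplePointSyzygy x y z s = r :=
  ⟨exists_triplePointSyzygy_of_triplePointRelation_eq_zero hp hnd,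
    fun ⟨s, hs⟩ => hs ▸ triplePointRelation_triplePointSyzygy s⟩

end TriplePoint

theorem triplePointIdeal_ne_top (k : Type) [Field k] : triplePointIdeal k ≠ ⊤ := by
  rw [Ne, Ideal.eq_top_iff_one]
  intro h
  have hle : triplePointIdeal k ≤ RingHom.ker (constantCoeff : PolyS k →+* k) := by
    rw [triplePointIdeal, Ideal.span_le]
    rintro f (rfl | rfl | rfl) <;> simp
  simpa using hle h

/-- Let `k` be a field, `S = k[u,v,t]` and
`I = (uv - t², ut - v², vt - u²) ⊆ S`.  Define `N : S³ → S` by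
`N (r₁, r₂, r₃) = (v² - ut) r₁ + (u² - tv) r₂ + (t² - uv) r₃` and `M : S² → S³` by
`M (s₁, s₂) = (t s₁ + u s₂, v s₁ + t s₂, u s₁ + v s₂)`.  Then the image of `N` equals `I`, the
sequence `0 → S² → S³ → S → S/I → 0` (with maps `M`, `N` and the projection) is exact; in
particular `M` is injective, `ker N = im M`, and `S/I` has projective dimension `2` over `S`
(the displayed free resolution has length `2`, and neither `S/I` nor `I` is projective). -/
theorem stmt12 (k : Type) [Field k]
    (N : (Fin 3 → PolyS k) → PolyS k)
    (hN : ∀ r, N r = ((X 1 : PolyS k) ^ 2 - X 0 * X 2) * r 0 +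
      ((X 0 : PolyS k) ^ 2 - X 2 * X 1) * r 1 + ((X 2 : PolyS k) ^ 2 - X 0 * X 1) * r 2)
    (M : (Fin 2 → PolyS k) → (Fin 3 → PolyS k))
    (hM : ∀ s, M s = ![(X 2 : PolyS k) * s 0 + X 0 * s 1,
      (X 1 : PolyS k) * s 0 + X 2 * s 1, (X 0 : PolyS k) * s 0 + X 1 * s 1]) :
    -- the image of `N` is `I`, i.e. the sequence is exact at `S` (the kernel of
    -- `S → S/I` being `I`)
    (∀ f : PolyS k, f ∈ triplePointIdeal k ↔ ∃ r, N r = f) ∧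
    -- exactness at `S²`: `M` is injective
    Function.Injective M ∧
    -- exactness at `S³`: `ker N = im M`
    (∀ r : Fin 3 → PolyS k, N r = 0 ↔ ∃ s, M s = r) ∧
    -- `S/I` has projective dimension `2` over `S`: together with the above length-two free
    -- resolution, this amounts to `S/I` and `I` not being projective
    ¬ Module.Projective (PolyS k) (PolyS k ⧸ triplePointIdeal k) ∧
    ¬ Module.Projective (PolyS k) (triplePointIdeal k) := by
  obtain rfl : N = triplePointRelation (X 0) (X 1) (X 2) := funext hN
  obtain rfl : M = triplePointSyzygy (X 0) (X 1) (X 2) := funext hM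
  have hp : Prime (X 2 ^ 2 - X 0 * X 1 : PolyS k) :=
    UniqueFactorizationMonoid.irreducible_iff_prime.mp (MvPolynomial.irreducible_X_sq_sub_X_mul_X
      (by decide) (by decide) (by decide))
  have hnd : ¬ (X 2 ^ 2 - X 0 * X 1 : PolyS k) ∣ X 1 ^ 2 - X 0 * X 2 := by
    rintro ⟨c, hc⟩
    simpa using congrArg (eval ![0, 1, 0]) hc
  have hpI : X 2 ^ 2 - X 0 * X 1 ∈ triplePointIdeal k :=
    mem_span_iff_exists_triplePointRelation.mpr ⟨![0, 0, 1], by simp [triplePointRelation]⟩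
  have hbI : X 1 ^ 2 - X 0 * X 2 ∈ triplePointIdeal k :=
    mem_span_iff_exists_triplePointRelation.mpr ⟨![1, 0, 0], by simp [triplePointRelation]⟩
  refine ⟨fun _ => mem_span_iff_exists_triplePointRelation, triplePointSyzygy_injective hp.ne_zero,
    triplePointRelation_eq_zero_iff hp hnd, fun _ => ?_, fun _ => ?_⟩
  · have hbot : triplePointIdeal k ≠ ⊥ := fun h => hp.ne_zero (by simpa [h] using hpI)
    exact ((Ideal.isIdempotentElem_iff_eq_bot_or_top _ (IsNoetherian.noetherian _)).mp
      (Ideal.isIdempotentElem_of_pure _)).elim hbot (triplePointIdeal_ne_top k)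
  · exact triplePointIdeal_ne_top k (Ideal.eq_top_of_projective_of_prime_mem hp hpI hbI hnd)
end
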